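/- arXiv:0808.1616 — 7 statements merged into one kernel-verified Lean document; each statement's English description precedes it below -/
import Mathlib

section
/- There exists a constant C > 0 such that for every real B ≥ 1 one has |N(B) − 16·N₁(B)| ≤ C·B, where N(B) denotes the number of vectors (x₀,x₁,x₂,x₃,x₄) ∈ ℤ^5 with gcd(x₀,x₁,x₂,x₃,x₄) = 1, x₀x₁ = x₂x₃, x₀² + x₁² + x₂² − x₃² − 2x₄² = 0, max{|x₀|,|x₁|,|x₂|,|x₃|, √(2/3)·|x₄|} ≤ B, and with unordered pair {|x₀|,|x₁|} different from {|x₂|,|x₃|}. -/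
open scoped Classical

/-- The counting function `N(B)` of primitive integer points of height at most `B`. -/
noncomputable def NcountU (B : ℝ) : ℕ :=
  Set.ncard {x : ℤ × ℤ × ℤ × ℤ × ℤ |
    Int.gcd x.1 (Int.gcd x.2.1 (Int.gcd x.2.2.1 (Int.gcd x.2.2.2.1 x.2.2.2.2))) = 1 ∧
    x.1 * x.2.1 = x.2.2.1 * x.2.2.2.1 ∧
    x.1 ^ 2 + x.2.1 ^ 2 + x.2.2.1 ^ 2 - x.2.2.2.1 ^ 2 - 2 * x.2.2.2.2 ^ 2 = 0 ∧
    (|x.1| : ℝ) ≤ B ∧ (|x.2.1| : ℝ) ≤ B ∧ (|x.2.2.1| : ℝ) ≤ B ∧ (|x.2.2.2.1| : ℝ) ≤ B ∧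
      Real.sqrt (2 / 3) * (|x.2.2.2.2| : ℝ) ≤ B ∧
    ({|x.1|, |x.2.1|} : Set ℤ) ≠ ({|x.2.2.1|, |x.2.2.2.1|} : Set ℤ)}

/-- The counting function `N₁(B)`: quintuples of positive integers with
`gcd(x₀,x₁,x₂,x₃) = 1`, `max{x₀,x₁,x₂,x₃} ≤ B`, `x₀x₁ = x₂x₃`,
`x₀² + x₁² + x₂² − x₃² − 2x₄² = 0` and `{x₀,x₁} ≠ {x₂,x₃}`. -/
noncomputable def None (B : ℝ) : ℕ :=
  Set.ncard {x : ℤ × ℤ × ℤ × ℤ × ℤ |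
    0 < x.1 ∧ 0 < x.2.1 ∧ 0 < x.2.2.1 ∧ 0 < x.2.2.2.1 ∧ 0 < x.2.2.2.2 ∧
    Int.gcd x.1 (Int.gcd x.2.1 (Int.gcd x.2.2.1 x.2.2.2.1)) = 1 ∧
    (x.1 : ℝ) ≤ B ∧ (x.2.1 : ℝ) ≤ B ∧ (x.2.2.1 : ℝ) ≤ B ∧ (x.2.2.2.1 : ℝ) ≤ B ∧
    x.1 * x.2.1 = x.2.2.1 * x.2.2.2.1 ∧
    x.1 ^ 2 + x.2.1 ^ 2 + x.2.2.1 ^ 2 - x.2.2.2.1 ^ 2 - 2 * x.2.2.2.2 ^ 2 = 0 ∧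
    ({x.1, x.2.1} : Set ℤ) ≠ ({x.2.2.1, x.2.2.2.1} : Set ℤ)}

/-!
Points with all coordinates nonzero fall into classes of 16 under sign changes: the signs of
`x₀, x₁, x₂, x₄` are free and that of `x₃` is forced by `x₀x₁ = x₂x₃`; the class representative
with positive coordinates is exactly a point counted by `N₁(B)`.

A point with a zero coordinate has, up to the swap `x₀ ↔ x₁`, either `x₀ = x₂ = 0`, a primitive
solution of `x₁² − x₃² = 2x₄²`; or `x₀ = x₃ = 0`, a primitive solution of `x₁² + x₂² = 2x₄²`; or
`x₄ = 0`, a primitive solution of `x₀x₁ = x₂x₃`, `x₀² + x₁² + x₂² = x₃²`. The solutions of height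
at most `B` of each of these are parametrised by pairs `(u, v)` with `u², v² ≤ 2B` and boundedly
many discrete labels, so there are `O(B)` of them. The parametrisations come from
`(x + y)(x − y) = 2z²` with coprime factors, from primitive Pythagorean triples, and from writing
`(x₀, x₁, x₂, x₃) = (gm, nh, gn, mh)` with `m² − n² = Kg²`, `m² + n² = Kh²`, `K ∣ 2`.
-/

namespace QuarticDelPezzo

/-! ### Counting the points of a two-parameter family -/

lemma subset_image_of_forall_exists_param {α L : Type*} {S : Set α} (Λ : Finset L)
    (G : ℤ → ℤ → L → α) {R : ℝ}
    (hS : ∀ x ∈ S, ∃ u v : ℤ, ∃ l ∈ Λ, (u : ℝ) ^ 2 ≤ R ∧ (v : ℝ) ^ 2 ≤ R ∧ G u v l = x) :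
    S ⊆ (fun p : ℤ × ℤ × L => G p.1 p.2.1 p.2.2) ''
      ↑(Finset.Icc (-⌊√R⌋₊ : ℤ) ⌊√R⌋₊ ×ˢ Finset.Icc (-⌊√R⌋₊ : ℤ) ⌊√R⌋₊ ×ˢ Λ) := by
  have hIcc : ∀ u : ℤ, (u : ℝ) ^ 2 ≤ R → u ∈ Finset.Icc (-⌊√R⌋₊ : ℤ) ⌊√R⌋₊ := by
    intro u hu
    have : u.natAbs ≤ ⌊√R⌋₊ :=
      Nat.le_floor (by rw [Nat.cast_natAbs, Int.cast_abs]; exact Real.abs_le_sqrt hu)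
    rw [Finset.mem_Icc]
    omega
  rintro x hx
  obtain ⟨u, v, l, hl, hu, hv, rfl⟩ := hS x hx
  exact ⟨(u, v, l), Finset.mem_product.2 ⟨hIcc u hu, Finset.mem_product.2 ⟨hIcc v hv, hl⟩⟩, rfl⟩

lemma finite_of_forall_exists_param {α L : Type*} {S : Set α} (Λ : Finset L)
    (G : ℤ → ℤ → L → α) {R : ℝ}
    (hS : ∀ x ∈ S, ∃ u v : ℤ, ∃ l ∈ Λ, (u : ℝ) ^ 2 ≤ R ∧ (v : ℝ) ^ 2 ≤ R ∧ G u v l = x) :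
    S.Finite :=
  ((Finset.finite_toSet _).image _).subset (subset_image_of_forall_exists_param Λ G hS)

lemma ncard_le_of_forall_exists_param {α L : Type*} {S : Set α} (Λ : Finset L)
    (G : ℤ → ℤ → L → α) {R : ℝ} (hR : 1 ≤ R)
    (hS : ∀ x ∈ S, ∃ u v : ℤ, ∃ l ∈ Λ, (u : ℝ) ^ 2 ≤ R ∧ (v : ℝ) ^ 2 ≤ R ∧ G u v l = x) :
    (S.ncard : ℝ) ≤ 9 * Λ.card * R := by
  set M := ⌊√R⌋₊
  have hcard : S.ncard ≤ (2 * M + 1) ^ 2 * Λ.card := by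
    calc S.ncard ≤ _ := Set.ncard_le_ncard (subset_image_of_forall_exists_param Λ G hS)
          ((Finset.finite_toSet _).image _)
      _ ≤ _ := Set.ncard_image_le (Finset.finite_toSet _)
      _ = (2 * M + 1) ^ 2 * Λ.card := by
        rw [Set.ncard_coe_finset, Finset.card_product, Finset.card_product, Int.card_Icc,
          show ((M : ℤ) + 1 - -(M : ℤ)).toNat = 2 * M + 1 by omega]
        ring
  have hM : (M : ℝ) ≤ √R := Nat.floor_le (Real.sqrt_nonneg R)
  have h1 : 1 ≤ √R := Real.one_le_sqrt.2 hR
  have hM' : (2 * (M : ℝ) + 1) ^ 2 ≤ 9 * R := by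
    calc (2 * (M : ℝ) + 1) ^ 2 ≤ (3 * √R) ^ 2 := by gcongr; linarith
      _ = 9 * R := by rw [mul_pow, Real.sq_sqrt (by linarith)]; norm_num
  calc (S.ncard : ℝ) ≤ (2 * M + 1) ^ 2 * Λ.card := by exact_mod_cast hcard
    _ ≤ 9 * R * Λ.card := by gcongr
    _ = 9 * Λ.card * R := by ring

/-! ### Primitive solutions of three degenerate equations -/

lemma isCoprime_iff_forall_dvd {a b : ℤ} : IsCoprime a b ↔ ∀ k, k ∣ a → k ∣ b → k ∣ 1 :=
  Int.isCoprime_iff_gcd_eq_one.trans Int.gcd_eq_one_iff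

lemma dvd_one_of_sq_dvd_two_mul_sq {c e : ℤ} (hce : IsCoprime c e) (h : c ^ 2 ∣ 2 * e ^ 2) :
    c ∣ 1 := by
  have h2 : c ^ 2 ∣ 2 := (hce.pow (m := 2) (n := 2)).dvd_of_dvd_mul_right h
  have hc : c ≠ 0 := by rintro rfl; norm_num at h2
  have : c ^ 2 = 1 := Int.sq_eq_one_of_sq_le_three (by linarith [Int.le_of_dvd two_pos h2]) hc
  exact ⟨c, by rw [← this, sq]⟩

lemma isCoprime_of_two_mul_sq_eq {b d e s : ℤ} (hprim : ∀ k, k ∣ b → k ∣ d → k ∣ e → k ∣ 1)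
    (h : 2 * e ^ 2 = b ^ 2 + s * d ^ 2) : IsCoprime b d := by
  refine isCoprime_iff_forall_dvd.2 fun k hb hd => dvd_one_of_sq_dvd_two_mul_sq (e := e) ?_ ?_
  · exact isCoprime_iff_forall_dvd.2 fun j hj he => hprim j (hj.trans hb) (hj.trans hd) he
  · rw [h]
    exact dvd_add (pow_dvd_pow_of_dvd hb 2) (dvd_mul_of_dvd_right (pow_dvd_pow_of_dvd hd 2) s)

lemma exists_dvd_two_of_eq_or_eq_neg {x y : ℤ} (h : x = y ∨ x = -y) :
    ∃ ε : ℤ, ε ∣ 2 ∧ x = ε * y := by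
  rcases h with rfl | rfl
  · exact ⟨1, one_dvd 2, (one_mul _).symm⟩
  · exact ⟨-1, by norm_num, (neg_one_mul _).symm⟩

lemma mem_Icc_of_dvd_two {α : ℤ} (h : α ∣ 2) : α ∈ Finset.Icc (-2 : ℤ) 2 := by
  have h1 := Int.le_of_dvd two_pos h
  have h2 := Int.le_of_dvd two_pos (neg_dvd.2 h)
  rw [Finset.mem_Icc]
  omega

lemma le_abs_mul {α : ℤ} {x : ℝ} (hα : α ≠ 0) (hx : 0 ≤ x) : x ≤ |α * x| := by
  have : (1 : ℝ) ≤ |(α : ℝ)| := by exact_mod_cast Int.one_le_abs hα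
  rw [abs_mul, abs_of_nonneg hx]
  nlinarith

lemma exists_mul_sq_of_mul_eq_two_mul_sq_of_two_dvd {σ τ f : ℤ} (hc : IsCoprime σ τ)
    (h : σ * τ = 2 * f ^ 2) (hσ : 2 ∣ σ) :
    ∃ α β u v : ℤ, (α * β = 2 ∨ α * β = -2) ∧ σ = α * u ^ 2 ∧ τ = β * v ^ 2 := by
  obtain ⟨s, rfl⟩ := hσ
  have hs : s * τ = f ^ 2 := by linarith
  have hcs : IsCoprime s τ := hc.of_mul_left_right
  obtain ⟨u, ε, hu⟩ := exists_associated_pow_of_mul_eq_pow' hcs hs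
  obtain ⟨v, δ, hv⟩ := exists_associated_pow_of_mul_eq_pow' hcs.symm (by rw [mul_comm, hs])
  refine ⟨2 * ε, δ, u, v, ?_, by rw [← hu]; ring, by rw [← hv]; ring⟩
  rcases Int.units_eq_one_or (ε * δ) with h | h <;>
    [left; right] <;> rw [mul_assoc, ← Units.val_mul, h] <;> rfl

lemma exists_mul_sq_of_mul_eq_two_mul_sq {σ τ f : ℤ} (hc : IsCoprime σ τ)
    (h : σ * τ = 2 * f ^ 2) :
    ∃ α β u v : ℤ, (α * β = 2 ∨ α * β = -2) ∧ σ = α * u ^ 2 ∧ τ = β * v ^ 2 := by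
  rcases Int.prime_two.dvd_or_dvd ⟨f ^ 2, h⟩ with hσ | hτ
  · exact exists_mul_sq_of_mul_eq_two_mul_sq_of_two_dvd hc h hσ
  · obtain ⟨β, α, v, u, hαβ, hτ, hσ⟩ :=
      exists_mul_sq_of_mul_eq_two_mul_sq_of_two_dvd hc.symm (by rw [mul_comm, h]) hτ
    exact ⟨α, β, u, v, by rwa [mul_comm], hσ, hτ⟩

theorem exists_param_of_sq_sub_sq_eq_two_mul_sq {b d e : ℤ}
    (hprim : ∀ k, k ∣ b → k ∣ d → k ∣ e → k ∣ 1) (h : b ^ 2 - d ^ 2 = 2 * e ^ 2) :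
    ∃ u v α β γ : ℤ, α ∣ 2 ∧ β ∣ 2 ∧ γ ∣ 2 ∧
      b = α * u ^ 2 + β * v ^ 2 ∧ d = α * u ^ 2 - β * v ^ 2 ∧ e = γ * (2 * u * v) := by
  have hbd : IsCoprime b d := isCoprime_of_two_mul_sq_eq (s := -1) hprim (by linarith)
  have hpar : Even b ↔ Even d := by
    have : Even (b ^ 2 - d ^ 2) := ⟨e ^ 2, by linarith⟩
    simpa [parity_simps] using this
  obtain ⟨σ, hσ⟩ : Even (b + d) := by simp [parity_simps, hpar]
  obtain ⟨τ, hτ⟩ : Even (b - d) := by simp [parity_simps, hpar]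
  obtain rfl : b = σ + τ := by linarith
  obtain rfl : d = σ - τ := by linarith
  have hστ : IsCoprime σ τ := isCoprime_iff_forall_dvd.2 fun k hkσ hkτ =>
    isCoprime_iff_forall_dvd.1 hbd k (dvd_add hkσ hkτ) (dvd_sub hkσ hkτ)
  have he2 : e ^ 2 = 2 * (σ * τ) := by linarith
  obtain ⟨f, rfl⟩ : Even e := by
    have : Even (e ^ 2) := ⟨σ * τ, by linarith⟩
    simpa [parity_simps] using this
  obtain ⟨α, β, u, v, hαβ, rfl, rfl⟩ :=
    exists_mul_sq_of_mul_eq_two_mul_sq hστ (show _ = 2 * f ^ 2 by linarith)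
  have hf : f ^ 2 = (u * v) ^ 2 := by
    rcases hαβ with hαβ | hαβ <;> nlinarith [sq_nonneg f, sq_nonneg (u * v)]
  have hα : α ∣ 2 := hαβ.elim (fun h => ⟨β, h.symm⟩) fun h => ⟨-β, by linarith⟩
  have hβ : β ∣ 2 := hαβ.elim (fun h => ⟨α, by linarith⟩) fun h => ⟨-α, by linarith⟩
  obtain ⟨γ, hγ, hf⟩ := exists_dvd_two_of_eq_or_eq_neg (sq_eq_sq_iff_eq_or_eq_neg.1 hf)
  exact ⟨u, v, α, β, γ, hα, hβ, hγ, by ring, by ring, by rw [hf]; ring⟩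

theorem exists_param_of_sq_add_sq_eq_two_mul_sq {b c e : ℤ}
    (hprim : ∀ k, k ∣ b → k ∣ c → k ∣ e → k ∣ 1) (h : b ^ 2 + c ^ 2 = 2 * e ^ 2) :
    ∃ m n δ ε : ℤ, δ ∣ 2 ∧ ε ∣ 2 ∧ b = m ^ 2 - n ^ 2 + 2 * m * n ∧
      c = δ * (m ^ 2 - n ^ 2 - 2 * m * n) ∧ e = ε * (m ^ 2 + n ^ 2) := by
  have hbc : IsCoprime b c := isCoprime_of_two_mul_sq_eq (s := 1) hprim (by linarith)
  have hpar : Even b ↔ Even c := by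
    have : Even (b ^ 2 + c ^ 2) := ⟨e ^ 2, by linarith⟩
    simpa [parity_simps] using this
  obtain ⟨p, hp⟩ : Even (b + c) := by simp [parity_simps, hpar]
  obtain ⟨q, hq⟩ : Even (b - c) := by simp [parity_simps, hpar]
  obtain rfl : b = p + q := by linarith
  obtain rfl : c = p - q := by linarith
  have hpq : Int.gcd p q = 1 := Int.isCoprime_iff_gcd_eq_one.1 <|
    isCoprime_iff_forall_dvd.2 fun k hkp hkq => isCoprime_iff_forall_dvd.1 hbc k
      (dvd_add hkp hkq) (dvd_sub hkp hkq)
  have hpyth : PythagoreanTriple p q e := by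
    unfold PythagoreanTriple; linarith
  obtain ⟨m, n, hpq', he, -⟩ := PythagoreanTriple.coprime_classification.1 ⟨hpyth, hpq⟩
  have hsum : p + q = m ^ 2 - n ^ 2 + 2 * m * n := by
    rcases hpq' with ⟨hp', hq'⟩ | ⟨hp', hq'⟩ <;> linear_combination hp' + hq'
  have hdiff : p - q = m ^ 2 - n ^ 2 - 2 * m * n ∨ p - q = -(m ^ 2 - n ^ 2 - 2 * m * n) := by
    rcases hpq' with ⟨hp', hq'⟩ | ⟨hp', hq'⟩
    exacts [Or.inl (by linear_combination hp' - hq'), Or.inr (by linear_combination hp' - hq')]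
  obtain ⟨δ, hδ, hc⟩ := exists_dvd_two_of_eq_or_eq_neg hdiff
  obtain ⟨ε, hε, he⟩ := exists_dvd_two_of_eq_or_eq_neg he
  exact ⟨m, n, δ, ε, hδ, hε, hsum, hc, he⟩

theorem exists_param_of_mul_eq_mul_of_sq_add_sq_add_sq_eq_sq {a b c d : ℤ} (hc : c ≠ 0)
    (hprim : ∀ k, k ∣ a → k ∣ b → k ∣ c → k ∣ d → k ∣ 1) (hmul : a * b = c * d)
    (heq : a ^ 2 + b ^ 2 + c ^ 2 = d ^ 2) :
    ∃ m n g h K : ℤ, 0 < g ∧ 0 < K ∧ K ∣ 2 ∧ a = g * m ∧ b = n * h ∧ c = g * n ∧ d = m * h ∧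
      m ^ 2 - n ^ 2 = K * g ^ 2 ∧ m ^ 2 + n ^ 2 = K * h ^ 2 := by
  obtain ⟨g, m, n, hg, hmn, rfl, rfl⟩ := Int.exists_gcd_one' (Int.gcd_pos_of_ne_zero_right a hc)
  have hg0 : (g : ℤ) ≠ 0 := by positivity
  have hn : n ≠ 0 := by rintro rfl; simp at hc
  have hmn : IsCoprime m n := Int.isCoprime_iff_gcd_eq_one.2 hmn
  have hmb : m * b = n * d := mul_left_cancel₀ hg0 (by linear_combination hmul)
  obtain ⟨h, rfl⟩ : n ∣ b := hmn.symm.dvd_of_dvd_mul_left ⟨d, hmb⟩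
  obtain rfl : d = m * h := mul_left_cancel₀ hn (by linear_combination -hmb)
  have hgh : IsCoprime (g : ℤ) h := isCoprime_iff_forall_dvd.2 fun k hkg hkh =>
    hprim k (dvd_mul_of_dvd_right hkg m) (dvd_mul_of_dvd_right hkh n)
      (dvd_mul_of_dvd_right hkg n) (dvd_mul_of_dvd_right hkh m)
  have key : (g : ℤ) ^ 2 * (m ^ 2 + n ^ 2) = h ^ 2 * (m ^ 2 - n ^ 2) := by
    linear_combination heq
  obtain ⟨K, hK⟩ : (g : ℤ) ^ 2 ∣ m ^ 2 - n ^ 2 :=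
    (hgh.pow (m := 2) (n := 2)).dvd_of_dvd_mul_left ⟨_, key.symm⟩
  have hKh : m ^ 2 + n ^ 2 = K * h ^ 2 :=
    mul_left_cancel₀ (pow_ne_zero 2 hg0) (by rw [key, hK]; ring)
  have hKpos : 0 < K := by
    have : 0 < n ^ 2 := by positivity
    nlinarith [sq_nonneg m, sq_nonneg h]
  -- `K` divides `2m² = K(h² + g²)` and `2n² = K(h² − g²)`, and `m², n²` are coprime.
  obtain ⟨x, y, hxy⟩ := hmn.pow (m := 2) (n := 2)
  refine ⟨m, n, g, h, K, by positivity, hKpos, ⟨x * (h ^ 2 + g ^ 2) + y * (h ^ 2 - g ^ 2), ?_⟩,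
    by ring, by ring, by ring, by ring, by rw [hK]; ring, hKh⟩
  linear_combination (-2) * hxy + x * (hK + hKh) + y * (hKh - hK)

def hyperbolaPoints (B : ℝ) : Set (ℤ × ℤ × ℤ) :=
  {(b, d, e) : ℤ × ℤ × ℤ | (∀ k, k ∣ b → k ∣ d → k ∣ e → k ∣ 1) ∧ b ^ 2 - d ^ 2 = 2 * e ^ 2 ∧
    |(b : ℝ)| ≤ B ∧ |(d : ℝ)| ≤ B}

def hyperbolaParam (u v : ℤ) (l : ℤ × ℤ × ℤ) : ℤ × ℤ × ℤ :=
  (l.1 * u ^ 2 + l.2.1 * v ^ 2, l.1 * u ^ 2 - l.2.1 * v ^ 2, l.2.2 * (2 * u * v))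

lemma hyperbolaPoints_param {B : ℝ} :
    ∀ x ∈ hyperbolaPoints B, ∃ u v : ℤ,
      ∃ l ∈ Finset.Icc (-2 : ℤ) 2 ×ˢ Finset.Icc (-2 : ℤ) 2 ×ˢ Finset.Icc (-2 : ℤ) 2,
      (u : ℝ) ^ 2 ≤ B ∧ (v : ℝ) ^ 2 ≤ B ∧ hyperbolaParam u v l = x := by
  rintro ⟨b, d, e⟩ ⟨hprim, heq, hb, hd⟩
  have hsum : |((b + d : ℤ) : ℝ)| ≤ 2 * B := by push_cast; linarith [abs_add_le (b : ℝ) d]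
  have hdiff : |((b - d : ℤ) : ℝ)| ≤ 2 * B := by push_cast; linarith [abs_sub (b : ℝ) d]
  obtain ⟨u, v, α, β, γ, hα, hβ, hγ, rfl, rfl, rfl⟩ :=
    exists_param_of_sq_sub_sq_eq_two_mul_sq hprim heq
  refine ⟨u, v, (α, β, γ), Finset.mem_product.2 ⟨mem_Icc_of_dvd_two hα,
    Finset.mem_product.2 ⟨mem_Icc_of_dvd_two hβ, mem_Icc_of_dvd_two hγ⟩⟩, ?_, ?_, rfl⟩
  · have := le_abs_mul (ne_zero_of_dvd_ne_zero two_ne_zero hα) (sq_nonneg (u : ℝ))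
    rw [show ((α * u ^ 2 + β * v ^ 2 + (α * u ^ 2 - β * v ^ 2) : ℤ) : ℝ) = 2 * (α * u ^ 2) by
      push_cast; ring, abs_mul, abs_two] at hsum
    linarith
  · have := le_abs_mul (ne_zero_of_dvd_ne_zero two_ne_zero hβ) (sq_nonneg (v : ℝ))
    rw [show ((α * u ^ 2 + β * v ^ 2 - (α * u ^ 2 - β * v ^ 2) : ℤ) : ℝ) = 2 * (β * v ^ 2) by
      push_cast; ring, abs_mul, abs_two] at hdiff
    linarith

def ellipsePoints (B : ℝ) : Set (ℤ × ℤ × ℤ) :=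
  {(b, c, e) : ℤ × ℤ × ℤ | (∀ k, k ∣ b → k ∣ c → k ∣ e → k ∣ 1) ∧ b ^ 2 + c ^ 2 = 2 * e ^ 2 ∧
    |(b : ℝ)| ≤ B ∧ |(c : ℝ)| ≤ B}

def ellipseParam (m n : ℤ) (l : ℤ × ℤ) : ℤ × ℤ × ℤ :=
  (m ^ 2 - n ^ 2 + 2 * m * n, l.1 * (m ^ 2 - n ^ 2 - 2 * m * n), l.2 * (m ^ 2 + n ^ 2))

lemma ellipsePoints_param {B : ℝ} :
    ∀ x ∈ ellipsePoints B, ∃ m n : ℤ, ∃ l ∈ Finset.Icc (-2 : ℤ) 2 ×ˢ Finset.Icc (-2 : ℤ) 2,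
      (m : ℝ) ^ 2 ≤ B ∧ (n : ℝ) ^ 2 ≤ B ∧ ellipseParam m n l = x := by
  rintro ⟨b, c, e⟩ ⟨hprim, heq, hb, hc⟩
  have he : |((e : ℤ) : ℝ)| ≤ B := by
    have hb2 := sq_le_sq' (abs_le.1 hb).1 (abs_le.1 hb).2
    have hc2 := sq_le_sq' (abs_le.1 hc).1 (abs_le.1 hc).2
    have : (b : ℝ) ^ 2 + c ^ 2 = 2 * e ^ 2 := by exact_mod_cast heq
    exact abs_le_of_sq_le_sq (by linarith) (le_trans (abs_nonneg _) hb)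
  obtain ⟨m, n, δ, ε, hδ, hε, rfl, rfl, rfl⟩ := exists_param_of_sq_add_sq_eq_two_mul_sq hprim heq
  have hmn := le_abs_mul (ne_zero_of_dvd_ne_zero two_ne_zero hε)
    (by positivity : (0 : ℝ) ≤ m ^ 2 + n ^ 2)
  push_cast at he
  exact ⟨m, n, (δ, ε), Finset.mem_product.2 ⟨mem_Icc_of_dvd_two hδ, mem_Icc_of_dvd_two hε⟩,
    by nlinarith [sq_nonneg (n : ℝ)], by nlinarith [sq_nonneg (m : ℝ)], rfl⟩

def surfacePoints (B : ℝ) : Set (ℤ × ℤ × ℤ × ℤ) :=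
  {(a, b, c, d) : ℤ × ℤ × ℤ × ℤ | (∀ k, k ∣ a → k ∣ b → k ∣ c → k ∣ d → k ∣ 1) ∧
    a * b = c * d ∧ a ^ 2 + b ^ 2 + c ^ 2 = d ^ 2 ∧ c ≠ 0 ∧ |(d : ℝ)| ≤ B}

/-- With `l = (K, s)`, the integers `(m² ∓ n²) / K` are the squares `g²`, `h²` of
`exists_param_of_mul_eq_mul_of_sq_add_sq_add_sq_eq_sq`, and `s` is the sign of `h`. -/
def surfaceParam (m n : ℤ) (l : ℤ × ℤ) : ℤ × ℤ × ℤ × ℤ :=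
  let g := Int.sqrt ((m ^ 2 - n ^ 2) / l.1)
  let h := l.2 * Int.sqrt ((m ^ 2 + n ^ 2) / l.1)
  (g * m, n * h, g * n, m * h)

lemma surfacePoints_param {B : ℝ} :
    ∀ x ∈ surfacePoints B, ∃ m n : ℤ, ∃ l ∈ Finset.Icc (-2 : ℤ) 2 ×ˢ Finset.Icc (-2 : ℤ) 2,
      (m : ℝ) ^ 2 ≤ 2 * B ∧ (n : ℝ) ^ 2 ≤ 2 * B ∧ surfaceParam m n l = x := by
  rintro ⟨a, b, c, d⟩ ⟨hprim, hmul, heq, hc, hd⟩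
  obtain ⟨m, n, g, h, K, hg, hK, hK2, rfl, rfl, rfl, rfl, hg2, hh2⟩ :=
    exists_param_of_mul_eq_mul_of_sq_add_sq_add_sq_eq_sq hc hprim hmul heq
  obtain ⟨s, hs, hsh⟩ := exists_dvd_two_of_eq_or_eq_neg (x := h) (y := |h|) <| by
    rcases abs_choice h with h' | h' <;> [left; right] <;> linarith
  have hm : (m ^ 2) ^ 2 ≤ 2 * (m * h) ^ 2 := by
    have : K ≤ 2 := Int.le_of_dvd two_pos hK2
    have : m ^ 2 ≤ 2 * h ^ 2 := by nlinarith [sq_nonneg n, sq_nonneg h]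
    nlinarith [sq_nonneg m]
  have hn : n ^ 2 ≤ m ^ 2 := by nlinarith [sq_nonneg g]
  have hmB : (m : ℝ) ^ 2 ≤ 2 * B := by
    have hd2 := sq_le_sq' (abs_le.1 hd).1 (abs_le.1 hd).2
    have hm' : ((m : ℝ) ^ 2) ^ 2 ≤ 2 * ((m * h : ℤ) : ℝ) ^ 2 := by exact_mod_cast hm
    exact (le_abs_self _).trans
      (abs_le_of_sq_le_sq (by nlinarith [sq_nonneg B]) (by linarith [(abs_nonneg _).trans hd]))
  refine ⟨m, n, (K, s), Finset.mem_product.2 ⟨mem_Icc_of_dvd_two hK2, mem_Icc_of_dvd_two hs⟩,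
    hmB, le_trans (by exact_mod_cast hn) hmB, ?_⟩
  have hg' : (m ^ 2 - n ^ 2) / K = g * g := by rw [hg2, Int.mul_ediv_cancel_left _ hK.ne']; ring
  have hh' : (m ^ 2 + n ^ 2) / K = h * h := by rw [hh2, Int.mul_ediv_cancel_left _ hK.ne']; ring
  simp only [surfaceParam, hg', hh', Int.sqrt_eq, Int.natCast_natAbs, abs_of_pos hg, ← hsh]

/-! ### Sign classes of points with nonzero coordinates -/

def NPoints (B : ℝ) : Set (ℤ × ℤ × ℤ × ℤ × ℤ) :=
  {(a, b, c, d, e) : ℤ × ℤ × ℤ × ℤ × ℤ | (∀ k, k ∣ a → k ∣ b → k ∣ c → k ∣ d → k ∣ e → k ∣ 1) ∧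
    a * b = c * d ∧ a ^ 2 + b ^ 2 + c ^ 2 - d ^ 2 - 2 * e ^ 2 = 0 ∧
    |(a : ℝ)| ≤ B ∧ |(b : ℝ)| ≤ B ∧ |(c : ℝ)| ≤ B ∧ |(d : ℝ)| ≤ B ∧ √(2 / 3) * |(e : ℝ)| ≤ B ∧
    ({|a|, |b|} : Set ℤ) ≠ {|c|, |d|}}

def N₁Points (B : ℝ) : Set (ℤ × ℤ × ℤ × ℤ × ℤ) :=
  {(a, b, c, d, e) : ℤ × ℤ × ℤ × ℤ × ℤ | 0 < a ∧ 0 < b ∧ 0 < c ∧ 0 < d ∧ 0 < e ∧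
    (∀ k, k ∣ a → k ∣ b → k ∣ c → k ∣ d → k ∣ 1) ∧
    (a : ℝ) ≤ B ∧ (b : ℝ) ≤ B ∧ (c : ℝ) ≤ B ∧ (d : ℝ) ≤ B ∧ a * b = c * d ∧
    a ^ 2 + b ^ 2 + c ^ 2 - d ^ 2 - 2 * e ^ 2 = 0 ∧ ({a, b} : Set ℤ) ≠ {c, d}}

lemma NcountU_eq_ncard (B : ℝ) : NcountU B = (NPoints B).ncard := by
  unfold NcountU
  congr 1
  ext ⟨a, b, c, d, e⟩
  simp only [NPoints, Set.mem_ofPred_eq, Int.gcd_eq_one_iff, Int.dvd_coe_gcd_iff, and_imp]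

lemma None_eq_ncard (B : ℝ) : None B = (N₁Points B).ncard := by
  unfold None
  congr 1
  ext ⟨a, b, c, d, e⟩
  simp only [N₁Points, Set.mem_ofPred_eq, Int.gcd_eq_one_iff, Int.dvd_coe_gcd_iff, and_imp]

lemma dvd_one_of_dvd_of_sq_add_sq_add_sq_sub_sq_eq {a b c d e k : ℤ}
    (hprim : ∀ k, k ∣ a → k ∣ b → k ∣ c → k ∣ d → k ∣ e → k ∣ 1)
    (heq : a ^ 2 + b ^ 2 + c ^ 2 - d ^ 2 - 2 * e ^ 2 = 0)
    (ha : k ∣ a) (hb : k ∣ b) (hc : k ∣ c) (hd : k ∣ d) : k ∣ 1 := by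
  refine dvd_one_of_sq_dvd_two_mul_sq (e := e) ?_ ?_
  · exact isCoprime_iff_forall_dvd.2 fun j hjk hje =>
      hprim j (hjk.trans ha) (hjk.trans hb) (hjk.trans hc) (hjk.trans hd) hje
  · rw [show 2 * e ^ 2 = a ^ 2 + b ^ 2 + c ^ 2 - d ^ 2 by linarith]
    exact (dvd_add (dvd_add (pow_dvd_pow_of_dvd ha 2) (pow_dvd_pow_of_dvd hb 2))
      (pow_dvd_pow_of_dvd hc 2)).sub (pow_dvd_pow_of_dvd hd 2)

lemma sqrt_two_thirds_mul_abs_le {a b c d e : ℤ} {B : ℝ}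
    (heq : a ^ 2 + b ^ 2 + c ^ 2 - d ^ 2 - 2 * e ^ 2 = 0)
    (ha : |(a : ℝ)| ≤ B) (hb : |(b : ℝ)| ≤ B) (hc : |(c : ℝ)| ≤ B) :
    √(2 / 3) * |(e : ℝ)| ≤ B := by
  have hB : 0 ≤ B := (abs_nonneg _).trans ha
  have heq' : (a : ℝ) ^ 2 + b ^ 2 + c ^ 2 - d ^ 2 - 2 * e ^ 2 = 0 := by exact_mod_cast heq
  have ha2 := sq_le_sq' (abs_le.1 ha).1 (abs_le.1 ha).2
  have hb2 := sq_le_sq' (abs_le.1 hb).1 (abs_le.1 hb).2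
  have hc2 := sq_le_sq' (abs_le.1 hc).1 (abs_le.1 hc).2
  rw [← Real.sqrt_sq_eq_abs, ← Real.sqrt_mul (by norm_num), ← Real.sqrt_sq hB]
  exact Real.sqrt_le_sqrt (by nlinarith [sq_nonneg (d : ℝ)])

def nonzeroPoints : Set (ℤ × ℤ × ℤ × ℤ × ℤ) :=
  {(a, b, c, d, e) : ℤ × ℤ × ℤ × ℤ × ℤ | a ≠ 0 ∧ b ≠ 0 ∧ c ≠ 0 ∧ d ≠ 0 ∧ e ≠ 0}

def absMap : ℤ × ℤ × ℤ × ℤ × ℤ → ℤ × ℤ × ℤ × ℤ × ℤ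
  | (a, b, c, d, e) => (|a|, |b|, |c|, |d|, |e|)

lemma mem_NPoints_inter_nonzeroPoints_iff {B : ℝ} {a b c d e : ℤ} :
    (a, b, c, d, e) ∈ NPoints B ∩ nonzeroPoints ↔
      a * b = c * d ∧ absMap (a, b, c, d, e) ∈ N₁Points B := by
  simp only [NPoints, N₁Points, nonzeroPoints, absMap, Set.mem_inter_iff, Set.mem_ofPred_eq,
    abs_pos, dvd_abs, sq_abs, Int.cast_abs, ← abs_mul]
  constructor
  · rintro ⟨⟨hprim, hmul, heq, ha, hb, hc, hd, -, hpair⟩, ha0, hb0, hc0, hd0, he0⟩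
    exact ⟨hmul, ha0, hb0, hc0, hd0, he0,
      fun k => dvd_one_of_dvd_of_sq_add_sq_add_sq_sub_sq_eq hprim heq, ha, hb, hc, hd,
      by rw [hmul], heq, hpair⟩
  · rintro ⟨hmul, ha0, hb0, hc0, hd0, he0, hprim, ha, hb, hc, hd, -, heq, hpair⟩
    exact ⟨⟨fun k h₁ h₂ h₃ h₄ _ => hprim k h₁ h₂ h₃ h₄, hmul, heq, ha, hb, hc, hd,
      sqrt_two_thirds_mul_abs_le heq ha hb hc, hpair⟩, ha0, hb0, hc0, hd0, he0⟩

lemma absMap_of_mem_N₁Points {B : ℝ} {x : ℤ × ℤ × ℤ × ℤ × ℤ} (hx : x ∈ N₁Points B) :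
    absMap x = x := by
  obtain ⟨a, b, c, d, e⟩ := x
  obtain ⟨ha, hb, hc, hd, he, -⟩ := hx
  simp only [absMap, abs_of_pos, ha, hb, hc, hd, he]

lemma abs_units_mul (u : ℤˣ) (x : ℤ) : |(u : ℤ) * x| = |x| := by
  rw [abs_mul, Int.isUnit_iff_abs_eq.1 u.isUnit, one_mul]

lemma exists_units_mul_abs_eq (x : ℤ) : ∃ u : ℤˣ, (u : ℤ) * |x| = x := by
  rcases abs_choice x with h | h
  · exact ⟨1, by rw [h, Units.val_one, one_mul]⟩
  · exact ⟨-1, by rw [h, Units.val_neg, Units.val_one, neg_one_mul, neg_neg]⟩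

def signMap : (ℤˣ × ℤˣ × ℤˣ × ℤˣ) × (ℤ × ℤ × ℤ × ℤ × ℤ) → ℤ × ℤ × ℤ × ℤ × ℤ
  | ((ε₀, ε₁, ε₂, ε₄), (a, b, c, d, e)) =>
    (ε₀ * a, ε₁ * b, ε₂ * c, (ε₀ * ε₁ * ε₂ : ℤˣ) * d, ε₄ * e)

lemma absMap_signMap (ε : ℤˣ × ℤˣ × ℤˣ × ℤˣ) (x : ℤ × ℤ × ℤ × ℤ × ℤ) :
    absMap (signMap (ε, x)) = absMap x := by
  obtain ⟨ε₀, ε₁, ε₂, ε₄⟩ := ε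
  obtain ⟨a, b, c, d, e⟩ := x
  simp only [signMap, absMap, abs_units_mul]

theorem signMap_bijOn (B : ℝ) :
    Set.BijOn signMap (Set.univ ×ˢ N₁Points B) (NPoints B ∩ nonzeroPoints) := by
  refine ⟨?_, ?_, ?_⟩
  · rintro ⟨⟨ε₀, ε₁, ε₂, ε₄⟩, a, b, c, d, e⟩ ⟨-, hx⟩
    have hx' : absMap (signMap ((ε₀, ε₁, ε₂, ε₄), (a, b, c, d, e))) ∈ N₁Points B := by
      rwa [absMap_signMap, absMap_of_mem_N₁Points hx]
    obtain ⟨-, -, -, -, -, -, -, -, -, -, hmul, -⟩ := hx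
    simp only [signMap] at hx' ⊢
    refine mem_NPoints_inter_nonzeroPoints_iff.2 ⟨?_, hx'⟩
    push_cast
    linear_combination (↑ε₀ * ↑ε₁ : ℤ) * hmul - (↑ε₀ * ↑ε₁ * c * d : ℤ) * Int.units_coe_mul_self ε₂
  · rintro ⟨ε, x⟩ ⟨-, hx : x ∈ N₁Points B⟩ ⟨δ, y⟩ ⟨-, hy : y ∈ N₁Points B⟩ h
    obtain rfl : x = y := by
      simpa only [absMap_signMap, absMap_of_mem_N₁Points hx, absMap_of_mem_N₁Points hy] using
        congrArg absMap h
    obtain ⟨ε₀, ε₁, ε₂, ε₄⟩ := ε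
    obtain ⟨δ₀, δ₁, δ₂, δ₄⟩ := δ
    obtain ⟨a, b, c, d, e⟩ := x
    obtain ⟨ha, hb, hc, -, he, -⟩ := hx
    simp only [signMap, Prod.mk.injEq] at h
    obtain ⟨h₀, h₁, h₂, -, h₄⟩ := h
    simp only [Prod.mk.injEq, and_true]
    exact ⟨Units.ext (mul_right_cancel₀ ha.ne' h₀), Units.ext (mul_right_cancel₀ hb.ne' h₁),
      Units.ext (mul_right_cancel₀ hc.ne' h₂), Units.ext (mul_right_cancel₀ he.ne' h₄)⟩
  · rintro ⟨a, b, c, d, e⟩ hy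
    obtain ⟨hmul, hx⟩ := mem_NPoints_inter_nonzeroPoints_iff.1 hy
    obtain ⟨ε₀, h₀⟩ := exists_units_mul_abs_eq a
    obtain ⟨ε₁, h₁⟩ := exists_units_mul_abs_eq b
    obtain ⟨ε₂, h₂⟩ := exists_units_mul_abs_eq c
    obtain ⟨ε₄, h₄⟩ := exists_units_mul_abs_eq e
    refine ⟨((ε₀, ε₁, ε₂, ε₄), absMap (a, b, c, d, e)), ⟨trivial, hx⟩, ?_⟩
    have hc : |c| ≠ 0 := hx.2.2.1.ne'
    have habs : |a| * |b| = |c| * |d| := by rw [← abs_mul, ← abs_mul, hmul]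
    rw [← h₀, ← h₁, ← h₂] at hmul
    simp only [signMap, absMap, h₀, h₁, h₂, h₄, Prod.mk.injEq, true_and, and_true]
    refine mul_left_cancel₀ hc ?_
    push_cast
    linear_combination (-(ε₀ * ε₁ * ε₂ : ℤ)) * habs + (ε₂ : ℤ) * hmul +
      (|c| * d) * Int.units_coe_mul_self ε₂

theorem ncard_NPoints_inter_nonzeroPoints (B : ℝ) :
    (NPoints B ∩ nonzeroPoints).ncard = 16 * (N₁Points B).ncard := by
  rw [← (signMap_bijOn B).image_eq, (signMap_bijOn B).injOn.ncard_image,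
    Set.ncard_prod, Set.ncard_univ]
  simp [Nat.card_eq_fintype_card]

/-! ### Points with a zero coordinate -/

lemma mem_Icc_ceil_of_abs_le {x : ℤ} {R : ℝ} (h : |(x : ℝ)| ≤ R) :
    x ∈ Set.Icc (-⌈R⌉) ⌈R⌉ := by
  have hR := Int.le_ceil R
  obtain ⟨h₁, h₂⟩ := abs_le.1 h
  constructor
  · have : ((-⌈R⌉ : ℤ) : ℝ) ≤ x := by push_cast; linarith
    exact_mod_cast this
  · exact_mod_cast h₂.trans hR

lemma NPoints_finite (B : ℝ) : (NPoints B).Finite := by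
  have hI := Set.finite_Icc (-⌈2 * B⌉) ⌈2 * B⌉
  refine (hI.prod (hI.prod (hI.prod (hI.prod hI)))).subset ?_
  rintro ⟨a, b, c, d, e⟩ ⟨-, -, -, ha, hb, hc, hd, he, -⟩
  have hB : 0 ≤ B := (abs_nonneg _).trans ha
  have h23 : (1 / 2 : ℝ) ≤ √(2 / 3) := Real.le_sqrt_of_sq_le (by norm_num)
  have he' : |(e : ℝ)| ≤ 2 * B := by nlinarith [abs_nonneg (e : ℝ)]
  exact ⟨mem_Icc_ceil_of_abs_le (by linarith), mem_Icc_ceil_of_abs_le (by linarith),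
    mem_Icc_ceil_of_abs_le (by linarith), mem_Icc_ceil_of_abs_le (by linarith),
    mem_Icc_ceil_of_abs_le he'⟩

lemma NPoints_diff_nonzeroPoints_subset (B : ℝ) :
    NPoints B \ nonzeroPoints ⊆
      (fun x : ℤ × ℤ × ℤ => (0, x.1, 0, x.2.1, x.2.2)) '' hyperbolaPoints B ∪
      (fun x : ℤ × ℤ × ℤ => (x.1, 0, 0, x.2.1, x.2.2)) '' hyperbolaPoints B ∪
      (fun x : ℤ × ℤ × ℤ => (0, x.1, x.2.1, 0, x.2.2)) '' ellipsePoints B ∪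
      (fun x : ℤ × ℤ × ℤ => (x.1, 0, x.2.1, 0, x.2.2)) '' ellipsePoints B ∪
      (fun x : ℤ × ℤ × ℤ × ℤ => (x.1, x.2.1, x.2.2.1, x.2.2.2, 0)) '' surfacePoints B := by
  rintro ⟨a, b, c, d, e⟩ ⟨⟨hprim, hmul, heq, ha, hb, hc, hd, -, -⟩, hnz⟩
  by_cases ha0 : a = 0
  · subst ha0
    rcases mul_eq_zero.1 (by rw [← hmul, zero_mul] : c * d = 0) with rfl | rfl
    · refine Or.inl <| Or.inl <| Or.inl <| Or.inl ⟨(b, d, e), ⟨?_, by linarith, hb, hd⟩, rfl⟩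
      exact fun k h₁ h₂ h₃ => hprim k (dvd_zero k) h₁ (dvd_zero k) h₂ h₃
    · refine Or.inl <| Or.inl <| Or.inr ⟨(b, c, e), ⟨?_, by linarith, hb, hc⟩, rfl⟩
      exact fun k h₁ h₂ h₃ => hprim k (dvd_zero k) h₁ h₂ (dvd_zero k) h₃
  by_cases hb0 : b = 0
  · subst hb0
    rcases mul_eq_zero.1 (by rw [← hmul, mul_zero] : c * d = 0) with rfl | rfl
    · refine Or.inl <| Or.inl <| Or.inl <| Or.inr ⟨(a, d, e), ⟨?_, by linarith, ha, hd⟩, rfl⟩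
      exact fun k h₁ h₂ h₃ => hprim k h₁ (dvd_zero k) (dvd_zero k) h₂ h₃
    · refine Or.inl <| Or.inr ⟨(a, c, e), ⟨?_, by linarith, ha, hc⟩, rfl⟩
      exact fun k h₁ h₂ h₃ => hprim k h₁ (dvd_zero k) h₂ (dvd_zero k) h₃
  have hcd : c * d ≠ 0 := hmul ▸ mul_ne_zero ha0 hb0
  obtain rfl : e = 0 := by
    by_contra he0
    exact hnz ⟨ha0, hb0, left_ne_zero_of_mul hcd, right_ne_zero_of_mul hcd, he0⟩
  refine Or.inr ⟨(a, b, c, d), ⟨?_, hmul, by linarith, left_ne_zero_of_mul hcd, hd⟩, rfl⟩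
  exact fun k h₁ h₂ h₃ h₄ => hprim k h₁ h₂ h₃ h₄ (dvd_zero k)

theorem ncard_NPoints_diff_nonzeroPoints_le {B : ℝ} (hB : 1 ≤ B) :
    ((NPoints B \ nonzeroPoints).ncard : ℝ) ≤ 3150 * B := by
  have fH := finite_of_forall_exists_param _ _ (hyperbolaPoints_param (B := B))
  have fE := finite_of_forall_exists_param _ _ (ellipsePoints_param (B := B))
  have fS := finite_of_forall_exists_param _ _ (surfacePoints_param (B := B))
  have cH := ncard_le_of_forall_exists_param _ _ hB hyperbolaPoints_param
  have cE := ncard_le_of_forall_exists_param _ _ hB ellipsePoints_param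
  have cS := ncard_le_of_forall_exists_param _ _ (by linarith : 1 ≤ 2 * B) surfacePoints_param
  have h5 : (Finset.Icc (-2 : ℤ) 2).card = 5 := rfl
  norm_num [Finset.card_product, h5] at cH cE cS
  have key : (NPoints B \ nonzeroPoints).ncard ≤
      2 * (hyperbolaPoints B).ncard + 2 * (ellipsePoints B).ncard + (surfacePoints B).ncard := by
    refine (Set.ncard_le_ncard (NPoints_diff_nonzeroPoints_subset B) <|
      ((((fH.image _).union (fH.image _)).union (fE.image _)).union (fE.image _)).union
        (fS.image _)).trans ?_
    grw [Set.ncard_union_le, Set.ncard_union_le, Set.ncard_union_le, Set.ncard_union_le,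
      Set.ncard_image_le fH, Set.ncard_image_le fH, Set.ncard_image_le fE,
      Set.ncard_image_le fE, Set.ncard_image_le fS]
    omega
  have : ((NPoints B \ nonzeroPoints).ncard : ℝ) ≤
      2 * (hyperbolaPoints B).ncard + 2 * (ellipsePoints B).ncard + (surfacePoints B).ncard := by
    exact_mod_cast key
  linarith

end QuarticDelPezzo

theorem NcountU_eq_sixteen_None :
    ∃ C : ℝ, 0 < C ∧ ∀ B : ℝ, 1 ≤ B →
      |(NcountU B : ℝ) - 16 * (None B : ℝ)| ≤ C * B := by
  open QuarticDelPezzo in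
  refine ⟨3150, by norm_num, fun B hB => ?_⟩
  rw [NcountU_eq_ncard, None_eq_ncard,
    ← Set.ncard_inter_add_ncard_sdiff_eq_ncard _ nonzeroPoints (NPoints_finite B),
    ncard_NPoints_inter_nonzeroPoints]
  push_cast
  rw [add_sub_cancel_left, abs_of_nonneg (Nat.cast_nonneg _)]
  exact ncard_NPoints_diff_nonzeroPoints_le hB
end

section
/- There exists a constant C > 0 such that for all coprime positive integers a, b with ab ≠ 1 and every real B ≥ 1, the quantity M_{a,b}(B) differs by at most C from the number of pairs (s,t) ∈ ℤ² satisfying: gcd(s,t) = 1; s·(s − at) ≠ 0; 2as ≠ (a² − b²)t; t > 0; Q₃(s,t) < 0; and for j = 1, 2, Q_j(s,t) < 0 and max{a,b}·(−Q_j(s,t)) ≤ λ·B, where λ = gcd(Q₁(s,t), Q₂(s,t)). -/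
open scoped Classical

/-- `Q₁(s,t) = 2s² + (a² − b²)t² − 4ast`. -/
def Q1 (a b s t : ℤ) : ℤ := 2 * s ^ 2 + (a ^ 2 - b ^ 2) * t ^ 2 - 4 * a * s * t

/-- `Q₂(s,t) = −2s² + (a² − b²)t²`. -/
def Q2 (a b s t : ℤ) : ℤ := -2 * s ^ 2 + (a ^ 2 - b ^ 2) * t ^ 2

/-- `Q₃(s,t) = −2as² + 2(a² − b²)st − a(a² − b²)t²`. -/
def Q3 (a b s t : ℤ) : ℤ :=
  -2 * a * s ^ 2 + 2 * (a ^ 2 - b ^ 2) * s * t - a * (a ^ 2 - b ^ 2) * t ^ 2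

/-- `M_{a,b}(B)`: the number of positive integer triples `(x,y,z)` with
`(a²−b²)x² + (a²+b²)y² = 2z²`, `gcd(x,y) = 1` and `max{a,b}·max{x,y} ≤ B`. -/
noncomputable def Mcount (a b : ℤ) (B : ℝ) : ℕ :=
  Set.ncard {p : ℤ × ℤ × ℤ |
    0 < p.1 ∧ 0 < p.2.1 ∧ 0 < p.2.2 ∧
    (a ^ 2 - b ^ 2) * p.1 ^ 2 + (a ^ 2 + b ^ 2) * p.2.1 ^ 2 = 2 * p.2.2 ^ 2 ∧
    Int.gcd p.1 p.2.1 = 1 ∧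
    ((max a b : ℤ) : ℝ) * ((max p.1 p.2.1 : ℤ) : ℝ) ≤ B}

/-!
The forms satisfy `(a² − b²)Q₁² + (a² + b²)Q₂² = 2Q₃²` and parametrize the rational points of this
conic; the directions with `s(s − at) = 0` give the points `(1 : 1 : ±a)`, the only ones with
`x = y`. For primitive `(s, t)` the gcd `λ` of `Q₁, Q₂` also divides `Q₃`, so `−(Q₁, Q₂, Q₃)/λ`
is a primitive solution, and the height conditions on `(s, t)` say exactly that it has height
at most `B`. Conversely a solution `(x, y, z) ≠ (1, 1, a)` comes from the primitive direction of
`((a² − b²)(x − y), 2(z − ay))` normalized to `t > 0`, and from no other. So the lattice points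
are in bijection with the solutions other than `(1, 1, a)`, and the counts differ by at most one.
-/

theorem IsCoprime.dvd_of_dvd_mul_of_dvd_mul {R : Type*} [CommSemiring R] {g q s t : R}
    (h : IsCoprime s t) (hs : g ∣ s * q) (ht : g ∣ t * q) : g ∣ q := by
  obtain ⟨α, β, hαβ⟩ := h
  have hq : q = α * (s * q) + β * (t * q) := by
    rw [← mul_assoc, ← mul_assoc, ← add_mul, hαβ, one_mul]
  rw [hq]
  exact dvd_add (hs.mul_left α) (ht.mul_left β)

theorem Int.exists_eq_mul_of_snd_ne_zero {u v : ℤ} (hv : v ≠ 0) :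
    ∃ k s t : ℤ, k ≠ 0 ∧ Int.gcd s t = 1 ∧ 0 < t ∧ u = k * s ∧ v = k * t := by
  obtain ⟨s, t, hst, hu, hv'⟩ := Int.exists_gcd_one (Int.gcd_pos_of_ne_zero_right u hv)
  have hg : (Int.gcd u v : ℤ) ≠ 0 := by positivity
  have ht : t ≠ 0 := by rintro rfl; exact hv (by simpa using hv')
  rcases ht.lt_or_gt with ht | ht
  · exact ⟨-Int.gcd u v, -s, -t, neg_ne_zero.mpr hg, by simpa using hst, by omega,
      by linear_combination hu, by linear_combination hv'⟩
  · exact ⟨Int.gcd u v, s, t, hg, hst, ht, by linear_combination hu, by linear_combination hv'⟩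

theorem Int.eq_of_gcd_eq_one_of_mul_eq_mul {s t s' t' : ℤ} (h : Int.gcd s t = 1)
    (h' : Int.gcd s' t' = 1) (ht : 0 < t) (ht' : 0 < t') (hst : s * t' = s' * t) :
    s = s' ∧ t = t' := by
  have hts : IsCoprime t s := Int.isCoprime_iff_gcd_eq_one.mpr (by rwa [Int.gcd_comm])
  have hts' : IsCoprime t' s' := Int.isCoprime_iff_gcd_eq_one.mpr (by rwa [Int.gcd_comm])
  have htt : t = t' := Int.dvd_antisymm ht.le ht'.le
    (hts.dvd_of_dvd_mul_left ⟨s', by linarith⟩) (hts'.dvd_of_dvd_mul_left ⟨s, by linarith⟩)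
  subst htt
  exact ⟨mul_right_cancel₀ ht.ne' hst, rfl⟩

theorem Set.abs_ncard_sub_ncard_sdiff_singleton_le_one {α : Type*} (s : Set α) (x : α) :
    |(s.ncard : ℝ) - (s \ {x}).ncard| ≤ 1 := by
  have h₁ := Set.ncard_sdiff_singleton_le s x
  have h₂ := Set.pred_ncard_le_ncard_sdiff_singleton s x
  rw [abs_le]
  constructor <;> norm_cast <;> omega

theorem neg_mul_le_neg_mul_iff {m μ x : ℤ} {B : ℝ} (hμ : μ < 0) :
    (m : ℝ) * ((-(μ * x) : ℤ) : ℝ) ≤ ((-μ : ℤ) : ℝ) * B ↔ (m : ℝ) * x ≤ B := by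
  have hμ' : (0 : ℝ) < ((-μ : ℤ) : ℝ) := by exact_mod_cast neg_pos.mpr hμ
  rw [show (m : ℝ) * ((-(μ * x) : ℤ) : ℝ) = ((-μ : ℤ) : ℝ) * (m * x) by push_cast; ring]
  exact mul_le_mul_iff_right₀ hμ'

theorem mul_cast_max_le_iff {m B : ℝ} (hm : 0 ≤ m) {x y : ℤ} :
    m * ((max x y : ℤ) : ℝ) ≤ B ↔ m * x ≤ B ∧ m * y ≤ B := by
  rw [Int.cast_max, mul_max_of_nonneg _ _ hm, max_le_iff]

theorem exists_eq_smul_of_smul_eq_smul {k c x y z : ℤ} {v : ℤ × ℤ × ℤ} (hk : k ≠ 0)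
    (hxy : IsCoprime x y) (h : k • v = c • (x, y, z)) : ∃ μ, c = k * μ ∧ v = μ • (x, y, z) := by
  have h₁ : k * v.1 = c * x := congrArg Prod.fst h
  have h₂ : k * v.2.1 = c * y := congrArg (fun p => p.2.1) h
  obtain ⟨μ, hμ⟩ : k ∣ c :=
    hxy.dvd_of_dvd_mul_of_dvd_mul ⟨v.1, by linarith⟩ ⟨v.2.1, by linarith⟩
  refine ⟨μ, hμ, smul_right_injective _ hk ?_⟩
  simp only [h, hμ, smul_smul]

def Qvec (a b : ℤ) (p : ℤ × ℤ) : ℤ × ℤ × ℤ :=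
  (Q1 a b p.1 p.2, Q2 a b p.1 p.2, Q3 a b p.1 p.2)

def param (a b : ℤ) (p : ℤ × ℤ) : ℤ × ℤ × ℤ :=
  (-Q1 a b p.1 p.2 / Int.gcd (Q1 a b p.1 p.2) (Q2 a b p.1 p.2),
    -Q2 a b p.1 p.2 / Int.gcd (Q1 a b p.1 p.2) (Q2 a b p.1 p.2),
    -Q3 a b p.1 p.2 / Int.gcd (Q1 a b p.1 p.2) (Q2 a b p.1 p.2))

section Forms

variable (a b s t : ℤ)

theorem Q_sq_identity :
    (a ^ 2 - b ^ 2) * Q1 a b s t ^ 2 + (a ^ 2 + b ^ 2) * Q2 a b s t ^ 2 = 2 * Q3 a b s t ^ 2 := by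
  unfold Q1 Q2 Q3; ring

theorem Q1_sub_Q2 : Q1 a b s t - Q2 a b s t = 4 * s * (s - a * t) := by
  unfold Q1 Q2; ring

theorem Q1_add_Q2 : Q1 a b s t + Q2 a b s t = 2 * t * ((a ^ 2 - b ^ 2) * t - 2 * a * s) := by
  unfold Q1 Q2; ring

theorem mul_Q2_sub_Q3 : a * Q2 a b s t - Q3 a b s t = 2 * (a ^ 2 - b ^ 2) * t * (a * t - s) := by
  unfold Q2 Q3; ring

theorem Qvec_mul (k : ℤ) : Qvec a b (k * s, k * t) = k ^ 2 • Qvec a b (s, t) := by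
  simp only [Qvec, Q1, Q2, Q3, Prod.smul_mk, smul_eq_mul, Prod.mk.injEq]
  refine ⟨?_, ?_, ?_⟩ <;> ring

variable {a b s t} in
theorem Qvec_eq_smul_iff {μ x y z : ℤ} :
    Qvec a b (s, t) = μ • (x, y, z) ↔
      Q1 a b s t = μ * x ∧ Q2 a b s t = μ * y ∧ Q3 a b s t = μ * z := by
  simp only [Qvec, Prod.smul_mk, smul_eq_mul, Prod.mk.injEq]

end Forms

/-- After multiplication by `t`, and by `s` or `2s` according to the parity of `t`, `Q₃` becomes
an integral combination of `Q₁` and `Q₂`. -/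
theorem dvd_Q3_of_dvd_Q1_of_dvd_Q2 {a b s t g : ℤ} (hst : Int.gcd s t = 1)
    (h₁ : g ∣ Q1 a b s t) (h₂ : g ∣ Q2 a b s t) : g ∣ Q3 a b s t := by
  have hcop : IsCoprime s t := Int.isCoprime_iff_gcd_eq_one.mpr hst
  have ht : g ∣ t * Q3 a b s t := by
    have : t * Q3 a b s t = s * Q1 a b s t + (s - a * t) * Q2 a b s t := by unfold Q1 Q2 Q3; ring
    exact this ▸ dvd_add (h₁.mul_left _) (h₂.mul_left _)
  obtain ⟨u, rfl | rfl⟩ := Int.even_or_odd' t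
  · refine hcop.dvd_of_dvd_mul_of_dvd_mul ?_ ht
    have : s * Q3 a b s (2 * u) = (a ^ 2 - b ^ 2) * u * Q1 a b s (2 * u) +
        (a * s - (a ^ 2 - b ^ 2) * u) * Q2 a b s (2 * u) := by unfold Q1 Q2 Q3; ring
    exact this ▸ dvd_add (h₁.mul_left _) (h₂.mul_left _)
  · have h2 : IsCoprime (2 : ℤ) (2 * u + 1) := ⟨-u, 1, by ring⟩
    refine (h2.mul_left hcop).dvd_of_dvd_mul_of_dvd_mul ?_ ht
    have : 2 * s * Q3 a b s (2 * u + 1) = (a ^ 2 - b ^ 2) * (2 * u + 1) * Q1 a b s (2 * u + 1) +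
        (2 * a * s - (a ^ 2 - b ^ 2) * (2 * u + 1)) * Q2 a b s (2 * u + 1) := by
      unfold Q1 Q2 Q3; ring
    exact this ▸ dvd_add (h₁.mul_left _) (h₂.mul_left _)

section Representation

variable {a b s t μ x y z : ℤ}

theorem exists_Qvec_eq_smul (hst : Int.gcd s t = 1) (hQ1 : Q1 a b s t ≠ 0) :
    ∃ μ : ℤ, μ < 0 ∧ ∃ x y z : ℤ, Int.gcd x y = 1 ∧ Qvec a b (s, t) = μ • (x, y, z) := by
  have hg := Int.gcd_pos_of_ne_zero_left (Q2 a b s t) hQ1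
  obtain ⟨x, y, hxy, h₁, h₂⟩ := Int.exists_gcd_one hg
  obtain ⟨z, h₃⟩ := dvd_Q3_of_dvd_Q1_of_dvd_Q2 (g := Int.gcd (Q1 a b s t) (Q2 a b s t)) hst
    (Int.gcd_dvd_left _ _) (Int.gcd_dvd_right _ _)
  refine ⟨-(Int.gcd (Q1 a b s t) (Q2 a b s t) : ℤ), by omega, -x, -y, -z, by simpa using hxy,
    Qvec_eq_smul_iff.mpr ⟨?_, ?_, ?_⟩⟩
  · linear_combination h₁
  · linear_combination h₂
  · linear_combination h₃

theorem gcd_Q1_Q2_eq_neg (hxy : Int.gcd x y = 1) (hμ : μ < 0)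
    (hQ : Qvec a b (s, t) = μ • (x, y, z)) : (Int.gcd (Q1 a b s t) (Q2 a b s t) : ℤ) = -μ := by
  obtain ⟨h₁, h₂, -⟩ := Qvec_eq_smul_iff.mp hQ
  rw [h₁, h₂, Int.gcd_mul_left, hxy, mul_one]
  omega

theorem param_eq (hxy : Int.gcd x y = 1) (hμ : μ < 0) (hQ : Qvec a b (s, t) = μ • (x, y, z)) :
    param a b (s, t) = (x, y, z) := by
  have hg := gcd_Q1_Q2_eq_neg hxy hμ hQ
  obtain ⟨h₁, h₂, h₃⟩ := Qvec_eq_smul_iff.mp hQ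
  have hμ' : -μ ≠ 0 := by omega
  simp only [param, hg]
  rw [h₁, h₂, h₃]
  simp only [← neg_mul, Int.mul_ediv_cancel_left _ hμ']

end Representation

def solutionSet (a b : ℤ) (B : ℝ) : Set (ℤ × ℤ × ℤ) :=
  {p : ℤ × ℤ × ℤ |
    0 < p.1 ∧ 0 < p.2.1 ∧ 0 < p.2.2 ∧
    (a ^ 2 - b ^ 2) * p.1 ^ 2 + (a ^ 2 + b ^ 2) * p.2.1 ^ 2 = 2 * p.2.2 ^ 2 ∧
    Int.gcd p.1 p.2.1 = 1 ∧
    ((max a b : ℤ) : ℝ) * ((max p.1 p.2.1 : ℤ) : ℝ) ≤ B}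

def latticeSet (a b : ℤ) (B : ℝ) : Set (ℤ × ℤ) :=
  {p : ℤ × ℤ |
    Int.gcd p.1 p.2 = 1 ∧
    p.1 * (p.1 - a * p.2) ≠ 0 ∧
    2 * a * p.1 ≠ (a ^ 2 - b ^ 2) * p.2 ∧
    0 < p.2 ∧
    Q3 a b p.1 p.2 < 0 ∧
    Q1 a b p.1 p.2 < 0 ∧ Q2 a b p.1 p.2 < 0 ∧
    ((max a b : ℤ) : ℝ) * ((-Q1 a b p.1 p.2 : ℤ) : ℝ) ≤
      (Int.gcd (Q1 a b p.1 p.2) (Q2 a b p.1 p.2) : ℝ) * B ∧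
    ((max a b : ℤ) : ℝ) * ((-Q2 a b p.1 p.2 : ℤ) : ℝ) ≤
      (Int.gcd (Q1 a b p.1 p.2) (Q2 a b p.1 p.2) : ℝ) * B}

section Correspondence

variable {a b s t μ x y z : ℤ} {B : ℝ}

theorem mem_latticeSet_iff (ha : 0 < a) (hxy : Int.gcd x y = 1) (hμ : μ < 0)
    (hQ : Qvec a b (s, t) = μ • (x, y, z)) :
    (s, t) ∈ latticeSet a b B ↔
      Int.gcd s t = 1 ∧ 0 < t ∧ (x, y, z) ∈ solutionSet a b B ∧ x ≠ y := by
  have hg : ((Int.gcd (Q1 a b s t) (Q2 a b s t) : ℕ) : ℝ) = ((-μ : ℤ) : ℝ) := by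
    rw [← gcd_Q1_Q2_eq_neg hxy hμ hQ, Int.cast_natCast]
  have hm : (0 : ℝ) ≤ ((max a b : ℤ) : ℝ) := by exact_mod_cast ha.le.trans (le_max_left a b)
  obtain ⟨h₁, h₂, h₃⟩ := Qvec_eq_smul_iff.mp hQ
  have hsq := Q_sq_identity a b s t
  have hdiff := Q1_sub_Q2 a b s t
  have hsum := Q1_add_Q2 a b s t
  rw [h₁, h₂, h₃] at hsq
  rw [h₁, h₂] at hdiff hsum
  simp only [latticeSet, solutionSet, Set.mem_ofPred_eq]
  rw [hg, h₁, h₂, h₃, neg_mul_le_neg_mul_iff hμ, neg_mul_le_neg_mul_iff hμ,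
    mul_cast_max_le_iff hm]
  constructor
  · rintro ⟨hst, hne, -, ht, hz, hx, hy, hBx, hBy⟩
    refine ⟨hst, ht, ⟨pos_of_mul_neg_right hx hμ.le, pos_of_mul_neg_right hy hμ.le,
      pos_of_mul_neg_right hz hμ.le, ?_, hxy, hBx, hBy⟩, ?_⟩
    · exact mul_left_cancel₀ (pow_ne_zero 2 hμ.ne) (by linear_combination hsq)
    · rintro rfl
      exact hne (by linarith)
  · rintro ⟨hst, ht, ⟨hx, hy, hz, -, -, hBx, hBy⟩, hne⟩
    refine ⟨hst, ?_, ?_, ht, mul_neg_of_neg_of_pos hμ hz, mul_neg_of_neg_of_pos hμ hx,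
      mul_neg_of_neg_of_pos hμ hy, hBx, hBy⟩
    · intro h
      have : μ * (x - y) = 0 := by linear_combination hdiff + 4 * h
      exact hne (by simpa [hμ.ne, sub_eq_zero] using this)
    · intro h
      have : μ * (x + y) < 0 := mul_neg_of_neg_of_pos hμ (by omega)
      have : μ * (x + y) = 0 := by linear_combination hsum - 2 * t * h
      omega

theorem proportional_of_Qvec_eq_smul (hQ : Qvec a b (s, t) = μ • (x, y, z)) :
    4 * (a ^ 2 - b ^ 2) * (s - a * t) * s = μ * ((a ^ 2 - b ^ 2) * (x - y)) ∧
      4 * (a ^ 2 - b ^ 2) * (s - a * t) * t = μ * (2 * (z - a * y)) := by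
  obtain ⟨h₁, h₂, h₃⟩ := Qvec_eq_smul_iff.mp hQ
  have hdiff := Q1_sub_Q2 a b s t
  have hlin := mul_Q2_sub_Q3 a b s t
  rw [h₁, h₂] at hdiff
  rw [h₂, h₃] at hlin
  constructor
  · linear_combination -(a ^ 2 - b ^ 2) * hdiff
  · linear_combination 2 * hlin

theorem eq_one_one_iff_of_mem_solutionSet (ha : 0 < a) (hM : (x, y, z) ∈ solutionSet a b B) :
    (x, y, z) = (1, 1, a) ↔ x = y := by
  simp only [solutionSet, Set.mem_ofPred_eq] at hM
  obtain ⟨hx, -, hz, heq, hxy, -⟩ := hM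
  refine ⟨fun h => by simp_all, fun h => ?_⟩
  subst h
  obtain rfl : x = 1 := by rw [Int.gcd_self] at hxy; omega
  obtain rfl : z = a := (pow_left_inj₀ hz.le ha.le two_ne_zero).mp (by linarith)
  rfl

theorem Qvec_solution_direction (heq : (a ^ 2 - b ^ 2) * x ^ 2 + (a ^ 2 + b ^ 2) * y ^ 2 = 2 * z ^ 2) :
    Qvec a b ((a ^ 2 - b ^ 2) * (x - y), 2 * (z - a * y)) =
      (4 * (a ^ 2 - b ^ 2) * ((a ^ 2 - b ^ 2) * x + (a ^ 2 + b ^ 2) * y - 2 * a * z)) • (x, y, z) := by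
  refine Qvec_eq_smul_iff.mpr ⟨?_, ?_, ?_⟩ <;> simp only [Q1, Q2, Q3]
  · linear_combination (2 * b ^ 2 - 2 * a ^ 2) * heq
  · linear_combination (2 * b ^ 2 - 2 * a ^ 2) * heq
  · linear_combination (2 * a * b ^ 2 - 2 * a ^ 3) * heq

theorem mul_solution_weight_neg (ha : 0 < a) (hx : 0 < x) (hy : 0 < y) (hz : 0 < z)
    (hxy : x ≠ y) (hD : a ^ 2 - b ^ 2 ≠ 0)
    (heq : (a ^ 2 - b ^ 2) * x ^ 2 + (a ^ 2 + b ^ 2) * y ^ 2 = 2 * z ^ 2) :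
    (a ^ 2 - b ^ 2) * ((a ^ 2 - b ^ 2) * x + (a ^ 2 + b ^ 2) * y - 2 * a * z) < 0 := by
  have hP : 0 < (a ^ 2 - b ^ 2) * x + (a ^ 2 + b ^ 2) * y := by
    nlinarith [mul_pos hy hy, mul_pos hx hy, sq_nonneg b]
  have hprod : (a ^ 2 - b ^ 2) * ((a ^ 2 - b ^ 2) * x + (a ^ 2 + b ^ 2) * y - 2 * a * z) *
      ((a ^ 2 - b ^ 2) * x + (a ^ 2 + b ^ 2) * y + 2 * a * z) =
        -((a ^ 2 - b ^ 2) ^ 2 * (a ^ 2 + b ^ 2) * (x - y) ^ 2) := by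
    linear_combination 2 * a ^ 2 * (a ^ 2 - b ^ 2) * heq
  have hxy' := sub_ne_zero.mpr hxy
  have hpos : 0 < (a ^ 2 - b ^ 2) ^ 2 * (a ^ 2 + b ^ 2) * (x - y) ^ 2 := by positivity
  exact neg_of_mul_neg_left (b := (a ^ 2 - b ^ 2) * x + (a ^ 2 + b ^ 2) * y + 2 * a * z)
    (by rw [hprod]; linarith) (by positivity)

theorem exists_Qvec_eq_smul_of_mem_solutionSet (ha : 0 < a) (hD : a ^ 2 - b ^ 2 ≠ 0)
    (hM : (x, y, z) ∈ solutionSet a b B) (hxy : x ≠ y) :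
    ∃ s t μ : ℤ, Int.gcd s t = 1 ∧ 0 < t ∧ μ < 0 ∧ Qvec a b (s, t) = μ • (x, y, z) := by
  simp only [solutionSet, Set.mem_ofPred_eq] at hM
  obtain ⟨hx, hy, hz, heq, hcop, -⟩ := hM
  have hzy : 2 * (z - a * y) ≠ 0 := by
    intro h
    obtain rfl : z = a * y := by linarith
    have : (a ^ 2 - b ^ 2) * ((x - y) * (x + y)) = 0 := by linear_combination heq
    simp only [mul_eq_zero, hD, sub_eq_zero, hxy, false_or] at this
    omega
  obtain ⟨k, s, t, hk, hst, ht, hu, hv⟩ := Int.exists_eq_mul_of_snd_ne_zero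
    (u := (a ^ 2 - b ^ 2) * (x - y)) hzy
  have hQ := Qvec_solution_direction heq
  rw [hu, hv, Qvec_mul] at hQ
  obtain ⟨μ, hc, hQ⟩ := exists_eq_smul_of_smul_eq_smul (pow_ne_zero 2 hk)
    (Int.isCoprime_iff_gcd_eq_one.mpr hcop) hQ
  have hneg := mul_solution_weight_neg ha hx hy hz hxy hD heq
  exact ⟨s, t, μ, hst, ht, neg_of_mul_neg_right (a := k ^ 2) (by linarith) (sq_nonneg k), hQ⟩

end Correspondence

section Bijection

variable {a b : ℤ} {B : ℝ}

theorem param_mapsTo (ha : 0 < a) :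
    Set.MapsTo (param a b) (latticeSet a b B) (solutionSet a b B \ {(1, 1, a)}) := by
  rintro ⟨s, t⟩ hp
  obtain ⟨μ, hμ, x, y, z, hxy, hQ⟩ := exists_Qvec_eq_smul hp.1 hp.2.2.2.2.2.1.ne
  obtain ⟨-, -, hM, hne⟩ := (mem_latticeSet_iff ha hxy hμ hQ).mp hp
  rw [param_eq hxy hμ hQ]
  exact ⟨hM, fun h => hne ((eq_one_one_iff_of_mem_solutionSet ha hM).mp h)⟩

theorem param_injOn (hD : a ^ 2 - b ^ 2 ≠ 0) : Set.InjOn (param a b) (latticeSet a b B) := by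
  rintro ⟨s, t⟩ hp ⟨s', t'⟩ hp' hpp
  simp only [latticeSet, Set.mem_ofPred_eq] at hp hp'
  obtain ⟨hst, hne, -, ht, -, hQ1, -⟩ := hp
  obtain ⟨hst', hne', -, ht', -, hQ1', -⟩ := hp'
  obtain ⟨μ, hμ, x, y, z, hxy, hQ⟩ := exists_Qvec_eq_smul hst hQ1.ne
  obtain ⟨μ', hμ', x', y', z', hxy', hQ'⟩ := exists_Qvec_eq_smul hst' hQ1'.ne
  rw [param_eq hxy hμ hQ, param_eq hxy' hμ' hQ'] at hpp
  simp only [Prod.mk.injEq] at hpp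
  obtain ⟨rfl, rfl, rfl⟩ := hpp
  obtain ⟨h₁, h₂⟩ := proportional_of_Qvec_eq_smul hQ
  obtain ⟨h₁', h₂'⟩ := proportional_of_Qvec_eq_smul hQ'
  set k := 4 * (a ^ 2 - b ^ 2) * (s - a * t)
  set k' := 4 * (a ^ 2 - b ^ 2) * (s' - a * t')
  set w := (a ^ 2 - b ^ 2) * (x - y)
  have hk : k ≠ 0 := mul_ne_zero (mul_ne_zero four_ne_zero hD) (right_ne_zero_of_mul hne)
  have hk' : k' ≠ 0 := mul_ne_zero (mul_ne_zero four_ne_zero hD) (right_ne_zero_of_mul hne')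
  have hcross : s * t' = s' * t := by
    refine mul_left_cancel₀ (mul_ne_zero hk hk') ?_
    linear_combination (k' * t') * h₁ + (μ * w) * h₂' - (k * t) * h₁' - (μ' * w) * h₂
  obtain ⟨rfl, rfl⟩ := Int.eq_of_gcd_eq_one_of_mul_eq_mul hst hst' ht ht' hcross
  rfl

theorem param_surjOn (ha : 0 < a) (hD : a ^ 2 - b ^ 2 ≠ 0) :
    Set.SurjOn (param a b) (latticeSet a b B) (solutionSet a b B \ {(1, 1, a)}) := by
  rintro ⟨x, y, z⟩ ⟨hM, hne⟩
  have hxy : x ≠ y := fun h => hne ((eq_one_one_iff_of_mem_solutionSet ha hM).mpr h)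
  obtain ⟨s, t, μ, hst, ht, hμ, hQ⟩ := exists_Qvec_eq_smul_of_mem_solutionSet ha hD hM hxy
  have hcop : Int.gcd x y = 1 := hM.2.2.2.2.1
  exact ⟨(s, t), (mem_latticeSet_iff ha hcop hμ hQ).mpr ⟨hst, ht, hM, hxy⟩, param_eq hcop hμ hQ⟩

theorem param_bijOn (ha : 0 < a) (hD : a ^ 2 - b ^ 2 ≠ 0) :
    Set.BijOn (param a b) (latticeSet a b B) (solutionSet a b B \ {(1, 1, a)}) :=
  ⟨param_mapsTo ha, param_injOn hD, param_surjOn ha hD⟩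

end Bijection

theorem Mcount_eq_lattice_point_count :
    ∃ C : ℝ, 0 < C ∧ ∀ a b : ℤ, 0 < a → 0 < b → Int.gcd a b = 1 → a * b ≠ 1 →
      ∀ B : ℝ, 1 ≤ B →
        |(Mcount a b B : ℝ) -
            (Set.ncard {p : ℤ × ℤ |
              Int.gcd p.1 p.2 = 1 ∧
              p.1 * (p.1 - a * p.2) ≠ 0 ∧
              2 * a * p.1 ≠ (a ^ 2 - b ^ 2) * p.2 ∧
              0 < p.2 ∧
              Q3 a b p.1 p.2 < 0 ∧
              Q1 a b p.1 p.2 < 0 ∧ Q2 a b p.1 p.2 < 0 ∧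
              ((max a b : ℤ) : ℝ) * ((-Q1 a b p.1 p.2 : ℤ) : ℝ) ≤
                (Int.gcd (Q1 a b p.1 p.2) (Q2 a b p.1 p.2) : ℝ) * B ∧
              ((max a b : ℤ) : ℝ) * ((-Q2 a b p.1 p.2 : ℤ) : ℝ) ≤
                (Int.gcd (Q1 a b p.1 p.2) (Q2 a b p.1 p.2) : ℝ) * B} : ℝ)| ≤ C := by
  refine ⟨1, one_pos, fun a b ha hb hab hab1 B _ => ?_⟩
  have hD : a ^ 2 - b ^ 2 ≠ 0 := by
    intro h
    obtain rfl : a = b := (pow_left_inj₀ ha.le hb.le two_ne_zero).mp (sub_eq_zero.mp h)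
    obtain rfl : a = 1 := by rw [Int.gcd_self] at hab; omega
    exact hab1 rfl
  change |((solutionSet a b B).ncard : ℝ) - ((latticeSet a b B).ncard : ℝ)| ≤ 1
  rw [(param_bijOn ha hD).ncard_eq]
  exact Set.abs_ncard_sub_ncard_sdiff_singleton_le_one _ _
end

section
/- Let a, b be coprime positive integers with ab ≠ 1, and let s, t be coprime integers. Set λ = gcd(Q₁(s,t), Q₂(s,t)), λ₁ = odd part of gcd(s, a² − b²), and λ₂ = odd part of gcd(s − at, a² + b²). Then λ = 2^ν · λ₁ · λ₂, where ν = 0 if 2 ∣ ab and t is odd; ν = 1 if 2 ∣ ab and t is even; ν = 1 if ab is odd and s is odd; and ν = min{2 + ν₂(s), ν₂(a² − b²)} if ab is odd and s is even (with the convention ν₂(0) = +∞, so that in the case s = 0 one has ν = ν₂(a² − b²)). -/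
open scoped Classical

/-- The odd part `m / 2^{ν₂(m)}` of a natural number. -/
def oddPart (m : ℕ) : ℕ := m / 2 ^ padicValNat 2 m

/-
Write `u = s - a t`, `D = a² - b²` and `S = a² + b²`, so that `Q₁ = 2u² - S t²`,
`Q₂ = D t² - 2s²` and `Q₁ - Q₂ = 4su`. As `s` and `u` are both coprime to `t`, a common divisor
of `Q₁` and `Q₂` divides `4 · gcd(s, D) · gcd(u, S)`; conversely `gcd(s, D)` and `gcd(u, S)`
divide both forms, and their odd parts are coprime because `gcd(D, S) ∣ 2` when `a` and `b` are
coprime. This gives the odd part. For the power of two, `gcd(Q₁, Q₂) = gcd(4su, Q₂)`, and in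
each parity case the 2-adic valuations of `4su`, `2s²` and `D t²` determine which powers of two
divide both.
-/

lemma oddPart_eq_ordCompl (m : ℕ) : oddPart m = ordCompl[2] m := by
  rw [oddPart, Nat.factorization_def m Nat.prime_two]

lemma two_pow_padicValNat_mul_oddPart (m : ℕ) : 2 ^ padicValNat 2 m * oddPart m = m := by
  rw [oddPart_eq_ordCompl, ← Nat.factorization_def m Nat.prime_two,
    Nat.ordProj_mul_ordCompl_eq_self]

lemma Nat.coprime_ordCompl_of_gcd_dvd {p m n : ℕ} (hp : p.Prime) (hm : m ≠ 0)
    (h : Nat.gcd m n ∣ p) : Nat.Coprime (ordCompl[p] m) (ordCompl[p] n) := by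
  have hdvd : Nat.gcd (ordCompl[p] m) (ordCompl[p] n) ∣ p :=
    (Nat.dvd_gcd ((Nat.gcd_dvd_left _ _).trans (Nat.ordCompl_dvd m p))
      ((Nat.gcd_dvd_right _ _).trans (Nat.ordCompl_dvd n p))).trans h
  rcases (Nat.dvd_prime hp).mp hdvd with h1 | hpg
  · exact h1
  · have h2 := Nat.gcd_dvd_left (ordCompl[p] m) (ordCompl[p] n)
    rw [hpg] at h2
    exact absurd h2 (Nat.not_dvd_ordCompl hp hm)

lemma two_pow_dvd_two_pow_mul_odd_iff {c : ℤ} (hc : Odd c) {k n : ℕ} :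
    (2 : ℤ) ^ n ∣ 2 ^ k * c ↔ n ≤ k := by
  refine ⟨fun h => ?_, fun h => (pow_dvd_pow 2 h).mul_right c⟩
  by_contra! hlt
  have h2 : (2 : ℤ) ^ k * 2 ∣ 2 ^ k * c := (pow_dvd_pow 2 hlt).trans h
  exact Int.not_even_iff_odd.mpr hc
    (even_iff_two_dvd.mpr ((mul_dvd_mul_iff_left (by positivity)).mp h2))

lemma exists_eq_two_pow_padicValInt_mul_odd {x : ℤ} (hx : x ≠ 0) :
    ∃ c, Odd c ∧ x = 2 ^ padicValInt 2 x * c := by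
  obtain ⟨c, hc⟩ := padicValInt_dvd (p := 2) x
  refine ⟨c, Int.not_even_iff_odd.mp fun ⟨d, hd⟩ => ?_, hc⟩
  have h : ((2 : ℕ) : ℤ) ^ (padicValInt 2 x + 1) ∣ x :=
    ⟨d, hc.trans (by rw [hd]; push_cast; ring)⟩
  rcases (padicValInt_dvd_iff _ x).mp h with h0 | hle
  · exact hx h0
  · omega

lemma padicValNat_gcd_eq_of_forall_pow_dvd_iff {p : ℕ} [Fact p.Prime] {x y : ℤ} {ν : ℕ}
    (h : ∀ n, (p : ℤ) ^ n ∣ x ∧ (p : ℤ) ^ n ∣ y ↔ n ≤ ν) :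
    padicValNat p (Int.gcd x y) = ν := by
  have h0 : Int.gcd x y ≠ 0 := fun h0 => by
    rw [Int.gcd_eq_zero_iff] at h0
    simpa [h0] using h (ν + 1)
  have key (n : ℕ) : n ≤ padicValNat p (Int.gcd x y) ↔ n ≤ ν := by
    rw [← padicValNat_dvd_iff_le h0, Int.dvd_gcd_iff, Nat.cast_pow, h]
  exact le_antisymm ((key _).mp le_rfl) ((key _).mpr le_rfl)

section

variable {a b s t : ℤ}

lemma sq_sub_sq_ne_zero_of_isCoprime (ha : 0 < a) (hb : 0 < b) (hab : IsCoprime a b)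
    (hab1 : a * b ≠ 1) : a ^ 2 - b ^ 2 ≠ 0 := by
  intro h
  obtain rfl : a = b := (sq_eq_sq₀ ha.le hb.le).mp (sub_eq_zero.mp h)
  exact hab1 (Int.isUnit_mul_self (isCoprime_self.mp hab))

lemma odd_sq_sub_sq_of_even_mul (hab : IsCoprime a b) (h : Even (a * b)) :
    Odd (a ^ 2 - b ^ 2) := by
  rcases Int.even_mul.mp h with ha | hb
  · have hb : Odd b := Int.isCoprime_two_left.mp (hab.of_isCoprime_of_dvd_left ha.two_dvd)
    exact (ha.pow_of_ne_zero two_ne_zero).sub_odd hb.pow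
  · have ha : Odd a := Int.isCoprime_two_left.mp (hab.symm.of_isCoprime_of_dvd_left hb.two_dvd)
    exact ha.pow.sub_even (hb.pow_of_ne_zero two_ne_zero)

lemma four_dvd_sq_sub_sq_of_odd (ha : Odd a) (hb : Odd b) : 4 ∣ a ^ 2 - b ^ 2 := by
  obtain ⟨x, rfl⟩ := ha
  obtain ⟨y, rfl⟩ := hb
  exact ⟨x ^ 2 + x - y ^ 2 - y, by ring⟩

lemma IsCoprime.dvd_two_of_dvd_sq_sub_sq_of_dvd_sq_add_sq (hab : IsCoprime a b) {d : ℤ}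
    (hD : d ∣ a ^ 2 - b ^ 2) (hS : d ∣ a ^ 2 + b ^ 2) : d ∣ 2 := by
  obtain ⟨x, y, hxy⟩ : IsCoprime (a ^ 2) (b ^ 2) := hab.pow
  rw [show (2 : ℤ) = (x + y) * (a ^ 2 + b ^ 2) + (x - y) * (a ^ 2 - b ^ 2) by
    linear_combination (-2) * hxy]
  exact dvd_add (hS.mul_left _) (hD.mul_left _)

lemma Q1_eq_add_Q2 (a b s t : ℤ) : Q1 a b s t = 4 * s * (s - a * t) + Q2 a b s t := by
  unfold Q1 Q2; ring

lemma dvd_Q1_and_Q2_iff {d : ℤ} :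
    d ∣ Q1 a b s t ∧ d ∣ Q2 a b s t ↔ d ∣ 4 * s * (s - a * t) ∧ d ∣ Q2 a b s t := by
  rw [Q1_eq_add_Q2]
  exact and_congr_left dvd_add_left

lemma dvd_Q1_and_Q2_of_dvd_sq_sub_sq {d : ℤ} (hs : d ∣ s) (hD : d ∣ a ^ 2 - b ^ 2) :
    d ∣ Q1 a b s t ∧ d ∣ Q2 a b s t := by
  refine dvd_Q1_and_Q2_iff.mpr ⟨?_, ?_⟩
  · exact (hs.mul_left 4).mul_right _
  · rw [Q2, show -2 * s ^ 2 = s * (-2 * s) by ring]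
    exact dvd_add (hs.mul_right _) (hD.mul_right _)

lemma dvd_Q1_and_Q2_of_dvd_sq_add_sq {d : ℤ} (hu : d ∣ s - a * t) (hS : d ∣ a ^ 2 + b ^ 2) :
    d ∣ Q1 a b s t ∧ d ∣ Q2 a b s t := by
  have h1 : d ∣ Q1 a b s t := by
    rw [show Q1 a b s t = (s - a * t) * (2 * (s - a * t)) - (a ^ 2 + b ^ 2) * t ^ 2 by
      unfold Q1; ring]
    exact dvd_sub (hu.mul_right _) (hS.mul_right _)
  refine ⟨h1, ?_⟩
  rw [Q1_eq_add_Q2] at h1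
  exact (dvd_add_right (hu.mul_left (4 * s))).mp h1

lemma dvd_sq_sub_sq_of_dvd_Q2 (hst : IsCoprime s t) {d : ℤ} (hs : d ∣ s)
    (hQ : d ∣ Q2 a b s t) : d ∣ a ^ 2 - b ^ 2 := by
  have hDt : d ∣ (a ^ 2 - b ^ 2) * t ^ 2 := by
    rw [show (a ^ 2 - b ^ 2) * t ^ 2 = Q2 a b s t + s * (2 * s) by unfold Q2; ring]
    exact dvd_add hQ (hs.mul_right _)
  exact ((hst.of_isCoprime_of_dvd_left hs).pow_right).dvd_of_dvd_mul_right hDt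

lemma dvd_sq_add_sq_of_dvd_Q1 (hst : IsCoprime s t) {d : ℤ} (hu : d ∣ s - a * t)
    (hQ : d ∣ Q1 a b s t) : d ∣ a ^ 2 + b ^ 2 := by
  have hSt : d ∣ (a ^ 2 + b ^ 2) * t ^ 2 := by
    rw [show (a ^ 2 + b ^ 2) * t ^ 2 = (s - a * t) * (2 * (s - a * t)) - Q1 a b s t by
      unfold Q1; ring]
    exact dvd_sub (hu.mul_right _) hQ
  have hut : IsCoprime (s - a * t) t := by
    simpa [sub_eq_add_neg, mul_comm] using hst.add_mul_left_left (-a)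
  exact ((hut.of_isCoprime_of_dvd_left hu).pow_right).dvd_of_dvd_mul_right hSt

lemma gcd_Q1_Q2_dvd (hst : IsCoprime s t) :
    Int.gcd (Q1 a b s t) (Q2 a b s t) ∣
      4 * Int.gcd s (a ^ 2 - b ^ 2) * Int.gcd (s - a * t) (a ^ 2 + b ^ 2) := by
  set g := Int.gcd (Q1 a b s t) (Q2 a b s t)
  have hg : (g : ℤ) ∣ Q1 a b s t ∧ (g : ℤ) ∣ Q2 a b s t :=
    ⟨Int.gcd_dvd_left _ _, Int.gcd_dvd_right _ _⟩
  obtain ⟨e, d, he, hd, hged⟩ :=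
    exists_dvd_and_dvd_of_dvd_mul (mul_assoc 4 s (s - a * t) ▸ (dvd_Q1_and_Q2_iff.mp hg).1)
  obtain ⟨d₁, d₂, hd₁, hd₂, rfl⟩ := exists_dvd_and_dvd_of_dvd_mul hd
  have hd₁g : d₁ ∣ g := hged ▸ (dvd_mul_right d₁ d₂).mul_left e
  have hd₂g : d₂ ∣ g := hged ▸ (dvd_mul_left d₂ d₁).mul_left e
  rw [← Int.natCast_dvd_natCast, hged, Nat.cast_mul, Nat.cast_mul, ← mul_assoc]
  refine mul_dvd_mul (mul_dvd_mul he (Int.dvd_coe_gcd hd₁ ?_)) (Int.dvd_coe_gcd hd₂ ?_)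
  · exact dvd_sq_sub_sq_of_dvd_Q2 hst hd₁ (hd₁g.trans hg.2)
  · exact dvd_sq_add_sq_of_dvd_Q1 hst hd₂ (hd₂g.trans hg.1)

lemma oddPart_gcd_Q1_Q2 (hab : IsCoprime a b) (hst : IsCoprime s t) (hD : a ^ 2 - b ^ 2 ≠ 0) :
    oddPart (Int.gcd (Q1 a b s t) (Q2 a b s t)) =
      oddPart (Int.gcd s (a ^ 2 - b ^ 2)) * oddPart (Int.gcd (s - a * t) (a ^ 2 + b ^ 2)) := by
  set X := Int.gcd s (a ^ 2 - b ^ 2)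
  set Y := Int.gcd (s - a * t) (a ^ 2 + b ^ 2)
  have hS : a ^ 2 + b ^ 2 ≠ 0 := fun hS => hD (by nlinarith [sq_nonneg a, sq_nonneg b])
  have hX : X ≠ 0 := fun h => hD (Int.gcd_eq_zero_iff.mp h).2
  have hY : Y ≠ 0 := fun h => hS (Int.gcd_eq_zero_iff.mp h).2
  have hXg : X ∣ Int.gcd (Q1 a b s t) (Q2 a b s t) := by
    have h := dvd_Q1_and_Q2_of_dvd_sq_sub_sq (a := a) (b := b) (t := t)
      (Int.gcd_dvd_left s _) (Int.gcd_dvd_right _ _)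
    exact Int.natCast_dvd_natCast.mp (Int.dvd_coe_gcd h.1 h.2)
  have hYg : Y ∣ Int.gcd (Q1 a b s t) (Q2 a b s t) := by
    have h := dvd_Q1_and_Q2_of_dvd_sq_add_sq (b := b)
      (Int.gcd_dvd_left (s - a * t) _) (Int.gcd_dvd_right _ _)
    exact Int.natCast_dvd_natCast.mp (Int.dvd_coe_gcd h.1 h.2)
  have hXY : Nat.gcd X Y ∣ 2 := by
    have hXYD : (Nat.gcd X Y : ℤ) ∣ a ^ 2 - b ^ 2 :=
      (Int.natCast_dvd_natCast.mpr (Nat.gcd_dvd_left X Y)).trans (Int.gcd_dvd_right _ _)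
    have hXYS : (Nat.gcd X Y : ℤ) ∣ a ^ 2 + b ^ 2 :=
      (Int.natCast_dvd_natCast.mpr (Nat.gcd_dvd_right X Y)).trans (Int.gcd_dvd_right _ _)
    exact_mod_cast hab.dvd_two_of_dvd_sq_sub_sq_of_dvd_sq_add_sq hXYD hXYS
  simp only [oddPart_eq_ordCompl]
  apply Nat.dvd_antisymm
  · rw [← Nat.ordCompl_mul, ← Nat.ordCompl_self_pow_mul (X * Y) 2 Nat.prime_two]
    exact Nat.ordCompl_dvd_ordCompl_of_dvd (by simpa [mul_assoc] using gcd_Q1_Q2_dvd hst) 2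
  · refine Nat.dvd_ordCompl_of_dvd_not_dvd ?_ fun h => ?_
    · exact (Nat.coprime_ordCompl_of_gcd_dvd Nat.prime_two hX hXY).mul_dvd_of_dvd_of_dvd
        ((Nat.ordCompl_dvd X 2).trans hXg) ((Nat.ordCompl_dvd Y 2).trans hYg)
    · rcases Nat.prime_two.dvd_mul.mp h with h | h
      exacts [Nat.not_dvd_ordCompl Nat.prime_two hX h, Nat.not_dvd_ordCompl Nat.prime_two hY h]

lemma padicValNat_gcd_Q1_Q2_eq {ν : ℕ}
    (h : ∀ n, (2 : ℤ) ^ n ∣ 4 * s * (s - a * t) ∧ (2 : ℤ) ^ n ∣ Q2 a b s t ↔ n ≤ ν) :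
    padicValNat 2 (Int.gcd (Q1 a b s t) (Q2 a b s t)) = ν :=
  padicValNat_gcd_eq_of_forall_pow_dvd_iff fun n => dvd_Q1_and_Q2_iff.trans (h n)

lemma padicValNat_gcd_Q1_Q2_of_odd_of_odd (hD : Odd (a ^ 2 - b ^ 2)) (ht : Odd t) :
    padicValNat 2 (Int.gcd (Q1 a b s t) (Q2 a b s t)) = 0 := by
  have hQ : Odd (Q2 a b s t) := by
    rw [Q2, show -2 * s ^ 2 = 2 * -s ^ 2 by ring]
    exact (even_two_mul _).add_odd (hD.mul ht.pow)
  refine padicValNat_gcd_Q1_Q2_eq fun n => ?_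
  have h := two_pow_dvd_two_pow_mul_odd_iff hQ (k := 0) (n := n)
  rw [pow_zero, one_mul] at h
  rw [h, and_iff_right_iff_imp]
  exact fun hn => by simp [Nat.le_zero.mp hn]

lemma padicValNat_gcd_Q1_Q2_of_odd_of_four_dvd (hs : Odd s)
    (h4 : 4 ∣ (a ^ 2 - b ^ 2) * t ^ 2) :
    padicValNat 2 (Int.gcd (Q1 a b s t) (Q2 a b s t)) = 1 := by
  obtain ⟨w, hw⟩ := h4
  have hQ : Q2 a b s t = 2 ^ 1 * (2 * w - s ^ 2) := by rw [Q2, hw]; ring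
  refine padicValNat_gcd_Q1_Q2_eq fun n => ?_
  rw [hQ, two_pow_dvd_two_pow_mul_odd_iff ((even_two_mul w).sub_odd hs.pow),
    and_iff_right_iff_imp]
  intro hn
  exact (((pow_dvd_pow 2 hn).trans ⟨2, by norm_num⟩).mul_right s).mul_right _

lemma padicValNat_gcd_Q1_Q2_of_even (hs : Even s) (hs0 : s ≠ 0) (ha : Odd a) (ht : Odd t)
    (hD : a ^ 2 - b ^ 2 ≠ 0) :
    padicValNat 2 (Int.gcd (Q1 a b s t) (Q2 a b s t)) =
      min (2 + padicValInt 2 s) (padicValInt 2 (a ^ 2 - b ^ 2)) := by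
  obtain ⟨s', hs', hss'⟩ := exists_eq_two_pow_padicValInt_mul_odd hs0
  obtain ⟨D', hD', hDD'⟩ := exists_eq_two_pow_padicValInt_mul_odd hD
  set k := padicValInt 2 s
  set m := padicValInt 2 (a ^ 2 - b ^ 2)
  set u := s - a * t
  have hk : 1 ≤ k := by
    by_contra! hk0
    rw [Nat.lt_one_iff.mp hk0, pow_zero, one_mul] at hss'
    exact Int.not_even_iff_odd.mpr hs' (hss' ▸ hs)
  have hu : Odd u := hs.sub_odd (ha.mul ht)
  have h4su : 4 * s * u = 2 ^ (2 + k) * (s' * u) := by rw [hss', pow_add]; ring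
  have hDt (n : ℕ) : (2 : ℤ) ^ n ∣ (a ^ 2 - b ^ 2) * t ^ 2 ↔ n ≤ m := by
    rw [hDD', mul_assoc]
    exact two_pow_dvd_two_pow_mul_odd_iff (hD'.mul ht.pow)
  have h2s : (2 : ℤ) ^ (2 + k) ∣ 2 * s ^ 2 :=
    (pow_dvd_pow 2 (by omega : 2 + k ≤ 2 * k + 1)).trans ⟨s' ^ 2, by rw [hss']; ring⟩
  have hQ2 : Q2 a b s t = (a ^ 2 - b ^ 2) * t ^ 2 - 2 * s ^ 2 := by unfold Q2; ring
  refine padicValNat_gcd_Q1_Q2_eq fun n => ?_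
  rw [h4su, two_pow_dvd_two_pow_mul_odd_iff (hs'.mul hu), le_min_iff, hQ2, ← hDt]
  refine and_congr_right fun hn => ?_
  exact dvd_sub_left ((pow_dvd_pow 2 hn).trans h2s)

end

theorem gcd_Q1_Q2_factorisation (a b : ℤ) (ha : 0 < a) (hb : 0 < b)
    (hab : Int.gcd a b = 1) (hab1 : a * b ≠ 1) (s t : ℤ) (hst : Int.gcd s t = 1) :
    Int.gcd (Q1 a b s t) (Q2 a b s t) =
      2 ^ (if (2 : ℤ) ∣ a * b then (if (2 : ℤ) ∣ t then 1 else 0)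
           else if (2 : ℤ) ∣ s then
             (if s = 0 then padicValInt 2 (a ^ 2 - b ^ 2)
              else min (2 + padicValInt 2 s) (padicValInt 2 (a ^ 2 - b ^ 2)))
           else 1) *
        oddPart (Int.gcd s (a ^ 2 - b ^ 2)) *
        oddPart (Int.gcd (s - a * t) (a ^ 2 + b ^ 2)) := by
  have hab' : IsCoprime a b := Int.isCoprime_iff_gcd_eq_one.mpr hab
  have hst' : IsCoprime s t := Int.isCoprime_iff_gcd_eq_one.mpr hst
  have hD := sq_sub_sq_ne_zero_of_isCoprime ha hb hab' hab1
  rw [mul_assoc, ← oddPart_gcd_Q1_Q2 hab' hst' hD]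
  nth_rw 1 [← two_pow_padicValNat_mul_oddPart (Int.gcd (Q1 a b s t) (Q2 a b s t))]
  congr 2
  simp only [← even_iff_two_dvd]
  split_ifs with h2ab h2t h2s hs0
  · have hs : Odd s :=
      Int.isCoprime_two_left.mp (hst'.symm.of_isCoprime_of_dvd_left h2t.two_dvd)
    have ht4 : (4 : ℤ) ∣ t ^ 2 := by simpa using pow_dvd_pow_of_dvd h2t.two_dvd 2
    exact padicValNat_gcd_Q1_Q2_of_odd_of_four_dvd hs (ht4.mul_left _)
  · exact padicValNat_gcd_Q1_Q2_of_odd_of_odd (odd_sq_sub_sq_of_even_mul hab' h2ab)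
      (Int.not_even_iff_odd.mp h2t)
  · -- `t = ±1`, so both forms equal `a² - b²`
    subst hs0
    simp [Q1, Q2, Int.isUnit_sq (isCoprime_zero_left.mp hst'), padicValInt]
  · have ha2 : Odd a := (Int.odd_mul.mp (Int.not_even_iff_odd.mp h2ab)).1
    have ht : Odd t := Int.isCoprime_two_left.mp (hst'.of_isCoprime_of_dvd_left h2s.two_dvd)
    exact padicValNat_gcd_Q1_Q2_of_even h2s hs0 ha2 ht hD
  · obtain ⟨ha2, hb2⟩ := Int.odd_mul.mp (Int.not_even_iff_odd.mp h2ab)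
    exact padicValNat_gcd_Q1_Q2_of_odd_of_four_dvd (Int.not_even_iff_odd.mp h2s)
      ((four_dvd_sq_sub_sq_of_odd ha2 hb2).mul_right _)
end

section
/- Let a, b, k₁, k₂, λ₁, λ₂, ℓ be positive integers with gcd(a,b) = 1, gcd(k₁λ₁, k₂λ₂) = 1 and gcd(k₁k₂λ₁λ₂, ab) = 1. Then the subgroup 𝔏 = {(s,t) ∈ ℤ² : lcm(k₁λ₁, ℓ) ∣ s, k₂λ₂ ∣ (s − a·t), ℓ ∣ t} has finite index in ℤ², equal to k₁k₂λ₁λ₂ℓ² / gcd(k₁k₂λ₁λ₂, ℓ). -/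
/-
𝔏 is the intersection of the rectangular lattice `Lℤ × ℓℤ`, `L = lcm(k₁λ₁, ℓ)`, with the kernel of
`(s, t) ↦ s - a t mod n`, `n = k₂λ₂`. Pulling back along the injective scaling `(x, y) ↦ (L x, ℓ y)`,
whose image has index `Lℓ`, turns it into the kernel of `(x, y) ↦ L x - aℓ y mod n`, whose image is
generated by `gcd(L, aℓ)` and so has `n / gcd(n, L, aℓ)` elements. Since `k₁λ₁` and `n` are coprime,
`gcd(n, L, aℓ) = gcd(n, ℓ)` and `gcd(k₁λ₁ n, ℓ) = gcd(k₁λ₁, ℓ) gcd(n, ℓ)`, which gives the formula.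
-/

/-- The sublattice `𝔏 = {(s,t) ∈ ℤ² : lcm(k₁λ₁, ℓ) ∣ s, k₂λ₂ ∣ s − at, ℓ ∣ t}`. -/
def latticeL (a k₁ k₂ l₁ l₂ ℓ : ℕ) : AddSubgroup (ℤ × ℤ) where
  carrier := {p : ℤ × ℤ |
    ((Nat.lcm (k₁ * l₁) ℓ : ℕ) : ℤ) ∣ p.1 ∧
    ((k₂ * l₂ : ℕ) : ℤ) ∣ (p.1 - (a : ℤ) * p.2) ∧
    ((ℓ : ℕ) : ℤ) ∣ p.2}
  zero_mem' := ⟨dvd_zero _, by simp, dvd_zero _⟩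
  add_mem' := by
    rintro p q ⟨h1, h2, h3⟩ ⟨g1, g2, g3⟩
    refine ⟨dvd_add h1 g1, ?_, dvd_add h3 g3⟩
    have h : (p + q).1 - (a : ℤ) * (p + q).2 =
        (p.1 - (a : ℤ) * p.2) + (q.1 - (a : ℤ) * q.2) := by
      simp only [Prod.fst_add, Prod.snd_add]; ring
    rw [h]
    exact dvd_add h2 g2
  neg_mem' := by
    rintro p ⟨h1, h2, h3⟩
    refine ⟨dvd_neg.2 h1, ?_, dvd_neg.2 h3⟩
    have h : (-p).1 - (a : ℤ) * (-p).2 = -(p.1 - (a : ℤ) * p.2) := by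
      simp only [Prod.fst_neg, Prod.snd_neg]; ring
    rw [h]
    exact dvd_neg.2 h2

def linearFormMod (n : ℕ) (u v : ℤ) : ℤ × ℤ →+ ZMod n :=
  AddMonoidHom.mk' (fun p ↦ ((u * p.1 - v * p.2 : ℤ) : ZMod n)) fun p q ↦ by
    push_cast [Prod.fst_add, Prod.snd_add]; ring

theorem range_linearFormMod (n : ℕ) (u v : ℤ) :
    (linearFormMod n u v).range = AddSubgroup.zmultiples ((Int.gcd u v : ℕ) : ZMod n) := by
  apply le_antisymm
  · rintro _ ⟨p, rfl⟩
    obtain ⟨u', hu⟩ := Int.gcd_dvd_left u v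
    obtain ⟨v', hv⟩ := Int.gcd_dvd_right u v
    refine AddSubgroup.mem_zmultiples_iff.2 ⟨u' * p.1 - v' * p.2, ?_⟩
    have hfactor : u * p.1 - v * p.2 = (u' * p.1 - v' * p.2) * (Int.gcd u v : ℕ) := by
      linear_combination p.1 * hu - p.2 * hv
    simp only [linearFormMod, AddMonoidHom.mk'_apply, zsmul_eq_mul, hfactor]
    push_cast; ring
  · rw [AddSubgroup.zmultiples_le]
    refine ⟨(Int.gcdA u v, -Int.gcdB u v), ?_⟩
    simp only [linearFormMod, AddMonoidHom.mk'_apply]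
    rw [← Int.cast_natCast, Int.gcd_eq_gcd_ab]
    push_cast; ring

theorem mem_ker_linearFormMod {n : ℕ} {u v : ℤ} {p : ℤ × ℤ} :
    p ∈ (linearFormMod n u v).ker ↔ (n : ℤ) ∣ u * p.1 - v * p.2 :=
  ZMod.intCast_zmod_eq_zero_iff_dvd _ _

theorem card_range_linearFormMod {n : ℕ} (hn : n ≠ 0) (u v : ℤ) :
    Nat.card (linearFormMod n u v).range = n / n.gcd (Int.gcd u v) := by
  rw [range_linearFormMod, Nat.card_zmultiples, ZMod.addOrderOf_coe _ hn]

def diagScale (c d : ℤ) : ℤ × ℤ →+ ℤ × ℤ :=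
  (zmultiplesHom ℤ c).prodMap (zmultiplesHom ℤ d)

theorem diagScale_injective {c d : ℤ} (hc : c ≠ 0) (hd : d ≠ 0) :
    Function.Injective (diagScale c d) :=
  Function.Injective.prodMap (mul_left_injective₀ hc) (mul_left_injective₀ hd)

theorem range_diagScale (c d : ℤ) :
    (diagScale c d).range = (AddSubgroup.zmultiples c).prod (AddSubgroup.zmultiples d) := by
  rw [diagScale, AddMonoidHom.range_prodMap, AddSubgroup.range_zmultiplesHom,
    AddSubgroup.range_zmultiplesHom]

theorem linearFormMod_comp_diagScale (n : ℕ) (u v c d : ℤ) :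
    (linearFormMod n u v).comp (diagScale c d) = linearFormMod n (u * c) (v * d) := by
  ext p
  simp [linearFormMod, diagScale, mul_assoc, mul_comm]

theorem index_range_diagScale_inf_ker_linearFormMod {n : ℕ} (hn : n ≠ 0) {c d : ℤ}
    (hc : c ≠ 0) (hd : d ≠ 0) (u v : ℤ) :
    ((diagScale c d).range ⊓ (linearFormMod n u v).ker).index =
      n / n.gcd (Int.gcd (u * c) (v * d)) * (c.natAbs * d.natAbs) := by
  rw [← AddSubgroup.map_comap_eq, AddSubgroup.index_map_of_injective _ (diagScale_injective hc hd),
    AddMonoidHom.comap_ker, linearFormMod_comp_diagScale, AddSubgroup.index_ker,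
    card_range_linearFormMod hn, range_diagScale, AddSubgroup.index_prod, Int.index_zmultiples,
    Int.index_zmultiples]

theorem latticeL_eq (a k₁ k₂ l₁ l₂ ℓ : ℕ) :
    latticeL a k₁ k₂ l₁ l₂ ℓ =
      (diagScale (Nat.lcm (k₁ * l₁) ℓ) ℓ).range ⊓ (linearFormMod (k₂ * l₂) 1 a).ker := by
  ext ⟨s, t⟩
  show _ ∧ _ ∧ _ ↔ _
  simp only [AddSubgroup.mem_inf, range_diagScale, AddSubgroup.mem_prod, Int.mem_zmultiples_iff,
    mem_ker_linearFormMod, one_mul]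
  tauto

theorem Nat.Coprime.gcd_lcm_eq_gcd {m n : ℕ} (h : m.Coprime n) (ℓ : ℕ) :
    n.gcd (m.lcm ℓ) = n.gcd ℓ :=
  Nat.dvd_antisymm
    (by simpa [Nat.Coprime.gcd_mul_left_cancel_right ℓ h] using
      Nat.gcd_dvd_gcd_of_dvd_right n (Nat.lcm_dvd_mul m ℓ))
    (Nat.gcd_dvd_gcd_of_dvd_right n (Nat.dvd_lcm_right m ℓ))

theorem Nat.Coprime.gcd_gcd_lcm_mul_eq_gcd {m n : ℕ} (h : m.Coprime n) (ℓ a : ℕ) :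
    n.gcd ((m.lcm ℓ).gcd (a * ℓ)) = n.gcd ℓ := by
  rw [← Nat.gcd_assoc, h.gcd_lcm_eq_gcd, Nat.gcd_eq_left ((Nat.gcd_dvd_right n ℓ).mul_left a)]

theorem Nat.Coprime.div_gcd_mul_lcm_mul {m n ℓ : ℕ} (h : m.Coprime n) (hℓ : ℓ ≠ 0) :
    n / n.gcd ℓ * (m.lcm ℓ * ℓ) = m * n * ℓ ^ 2 / (m * n).gcd ℓ := by
  rw [Nat.gcd_comm (m * n), Nat.Coprime.gcd_mul ℓ h, Nat.gcd_comm ℓ m, Nat.gcd_comm ℓ n]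
  symm
  apply Nat.div_eq_of_eq_mul_left (by positivity)
  calc m * n * ℓ ^ 2 = (m.gcd ℓ * m.lcm ℓ) * (n / n.gcd ℓ * n.gcd ℓ) * ℓ := by
        rw [Nat.gcd_mul_lcm, Nat.div_mul_cancel (Nat.gcd_dvd_left n ℓ)]; ring
    _ = n / n.gcd ℓ * (m.lcm ℓ * ℓ) * (m.gcd ℓ * n.gcd ℓ) := by ring

theorem latticeL_index_general (a k₁ k₂ l₁ l₂ ℓ : ℕ)
    (hk₁ : 0 < k₁) (hk₂ : 0 < k₂) (hl₁ : 0 < l₁) (hl₂ : 0 < l₂) (hℓ : 0 < ℓ)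
    (hco : Nat.gcd (k₁ * l₁) (k₂ * l₂) = 1) :
    (latticeL a k₁ k₂ l₁ l₂ ℓ).FiniteIndex ∧
      (latticeL a k₁ k₂ l₁ l₂ ℓ).index =
        k₁ * k₂ * l₁ * l₂ * ℓ ^ 2 / Nat.gcd (k₁ * k₂ * l₁ * l₂) ℓ := by
  have hn : 0 < k₂ * l₂ := by positivity
  have hindex : (latticeL a k₁ k₂ l₁ l₂ ℓ).index =
      k₂ * l₂ / (k₂ * l₂).gcd (((k₁ * l₁).lcm ℓ).gcd (a * ℓ)) * ((k₁ * l₁).lcm ℓ * ℓ) := by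
    rw [latticeL_eq, index_range_diagScale_inf_ker_linearFormMod hn.ne' (by positivity)
      (by positivity)]
    simp only [one_mul, ← Nat.cast_mul, Int.gcd_natCast_natCast, Int.natAbs_natCast]
  refine ⟨⟨?_⟩, ?_⟩
  · rw [hindex]
    exact mul_ne_zero (Nat.div_pos (Nat.gcd_le_left _ hn) (Nat.gcd_pos_of_pos_left _ hn)).ne'
      (by positivity)
  · rw [hindex, Nat.Coprime.gcd_gcd_lcm_mul_eq_gcd hco, Nat.Coprime.div_gcd_mul_lcm_mul hco hℓ.ne']
    ring_nf

theorem latticeL_index (a b k₁ k₂ l₁ l₂ ℓ : ℕ) (ha : 0 < a) (hb : 0 < b)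
    (hk₁ : 0 < k₁) (hk₂ : 0 < k₂) (hl₁ : 0 < l₁) (hl₂ : 0 < l₂) (hℓ : 0 < ℓ)
    (hab : Nat.gcd a b = 1) (hco : Nat.gcd (k₁ * l₁) (k₂ * l₂) = 1)
    (hcoab : Nat.gcd (k₁ * k₂ * l₁ * l₂) (a * b) = 1) :
    (latticeL a k₁ k₂ l₁ l₂ ℓ).FiniteIndex ∧
      (latticeL a k₁ k₂ l₁ l₂ ℓ).index =
        k₁ * k₂ * l₁ * l₂ * ℓ ^ 2 / Nat.gcd (k₁ * k₂ * l₁ * l₂) ℓ :=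
  latticeL_index_general a k₁ k₂ l₁ l₂ ℓ hk₁ hk₂ hl₁ hl₂ hℓ hco
end

section
/- Let c > 0. There exists a constant C = C(c) > 0 such that for every real H ≥ 1 and every Lebesgue measurable set 𝒮 ⊆ [−c,c]², the functions w₊ and w₋ satisfy: (i) 0 ≤ w₊(x) ≤ 1 and 0 ≤ w₋(x) ≤ 1 for all x ∈ ℝ²; (ii) w₊(x) ≥ 1 − C·e^{−H} for every x ∈ 𝒮; (iii) w₋(x) ≤ C·e^{−H} for every x ∉ 𝒮; (iv) w₋(x) ≤ C·exp(−‖x‖²H²/5) for every x ∈ ℝ² with ‖x‖ ≥ 4c, where ‖·‖ is the Euclidean norm. -/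
open MeasureTheory

/-- `S₊`: the union of closed balls of radius `1/√H` centred at points of `S`. -/
noncomputable def Splus (H : ℝ) (S : Set (EuclideanSpace ℝ (Fin 2))) :
    Set (EuclideanSpace ℝ (Fin 2)) :=
  ⋃ x ∈ S, Metric.closedBall x (1 / Real.sqrt H)

/-- `S₋`: the complement of the union of closed balls of radius `1/√H` centred
at points not in `S`. -/
noncomputable def Sminus (H : ℝ) (S : Set (EuclideanSpace ℝ (Fin 2))) :
    Set (EuclideanSpace ℝ (Fin 2)) :=
  (⋃ x ∈ Sᶜ, Metric.closedBall x (1 / Real.sqrt H))ᶜ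

/-- The smoothed weight `w₊`. -/
noncomputable def wplus (H : ℝ) (S : Set (EuclideanSpace ℝ (Fin 2)))
    (x : EuclideanSpace ℝ (Fin 2)) : ℝ :=
  H ^ 2 / Real.pi * ∫ y in Splus H S, Real.exp (-(‖y - x‖ ^ 2 * H ^ 2))

/-- The smoothed weight `w₋`. -/
noncomputable def wminus (H : ℝ) (S : Set (EuclideanSpace ℝ (Fin 2)))
    (x : EuclideanSpace ℝ (Fin 2)) : ℝ :=
  H ^ 2 / Real.pi * ∫ y in Sminus H S, Real.exp (-(‖y - x‖ ^ 2 * H ^ 2))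

/-!
The kernel `(H²/π) exp (-‖y - x‖² H²)` has total mass `1` on the plane, which gives (i), and by
polar coordinates its mass outside the disc of radius `r` about `x` is exactly `exp (-r² H²)`,
i.e. `e^{-H}` for `r = 1/√H`. A point of `S` has this whole disc inside `S₊`, and a point outside
`S` has it disjoint from `S₋`; this gives (ii) and (iii). Finally `S₋ ⊆ S` lies in the disc of
radius `2c` about the origin, on which the kernel at a point `x` with `‖x‖ ≥ 4c` is at most
`exp (-‖x‖² H² / 4)`; hence `w₋(x) ≤ 4c²H² exp (-‖x‖² H² / 4) ≤ 5 exp (-‖x‖² H² / 5)`, since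
`t e^{-t} ≤ 1`. So `C = 5` works for every `c`.
-/

open Real Set Metric Module

lemma integral_Ioi_mul_exp_neg_mul_sq {b : ℝ} (hb : 0 < b) (a : ℝ) :
    ∫ t in Ioi a, t * exp (-(t ^ 2 * b)) = exp (-(a ^ 2 * b)) / (2 * b) := by
  have hderiv (t : ℝ) (_ : t ∈ Ici a) :
      HasDerivAt (fun t ↦ -exp (-(t ^ 2 * b)) / (2 * b)) (t * exp (-(t ^ 2 * b))) t := by
    refine (((hasDerivAt_pow 2 t).mul_const b).fun_neg.exp.fun_neg.div_const
      (2 * b)).congr_deriv ?_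
    field_simp
    ring
  have hintegrable : IntegrableOn (fun t ↦ t * exp (-(t ^ 2 * b))) (Ioi a) := by
    simpa [mul_comm b] using (integrable_mul_exp_neg_mul_sq hb).integrableOn
  have hlim : Filter.Tendsto (fun t ↦ -exp (-(t ^ 2 * b)) / (2 * b)) Filter.atTop (nhds 0) := by
    have : Filter.Tendsto (fun t : ℝ ↦ t ^ 2 * b) Filter.atTop Filter.atTop :=
      (Filter.tendsto_pow_atTop two_ne_zero).atTop_mul_const hb
    simpa using ((tendsto_exp_atBot.comp (Filter.tendsto_neg_atTop_atBot.comp this)).neg).div_const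
      (2 * b)
  rw [integral_Ioi_of_hasDerivAt_of_tendsto' hderiv hintegrable hlim]
  ring

section FinrankTwo

variable {E F : Type*} [NormedAddCommGroup E] [InnerProductSpace ℝ E] [FiniteDimensional ℝ E]
  [MeasurableSpace E] [BorelSpace E] [NormedAddCommGroup F] [NormedSpace ℝ F]

lemma integral_fun_norm_of_finrank_eq_two (hE : finrank ℝ E = 2) (f : ℝ → F) :
    ∫ y : E, f ‖y‖ = (2 * π) • ∫ t in Ioi 0, t • f t := by
  have : Nontrivial E := Module.nontrivial_of_finrank_pos (R := ℝ) (by omega)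
  have hball : volume.real (ball (0 : E) 1) = π := by
    simp [measureReal_def, InnerProductSpace.volume_ball_of_dim_even (k := 1) hE, hE, pi_nonneg]
  rw [integral_fun_norm_addHaar volume f, hE, hball, ← Nat.cast_smul_eq_nsmul ℝ, smul_smul]
  simp

lemma integral_exp_neg_mul_sq_norm_sub (hE : finrank ℝ E = 2) {b : ℝ} (hb : 0 < b) (x : E) :
    ∫ y : E, exp (-(‖y - x‖ ^ 2 * b)) = π / b := by
  rw [integral_sub_right_eq_self (fun y ↦ exp (-(‖y‖ ^ 2 * b))) x,
    integral_fun_norm_of_finrank_eq_two hE (fun t ↦ exp (-(t ^ 2 * b)))]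
  simp only [smul_eq_mul]
  rw [integral_Ioi_mul_exp_neg_mul_sq hb]
  field_simp
  simp

lemma integrable_exp_neg_mul_sq_norm_sub (hE : finrank ℝ E = 2) {b : ℝ} (hb : 0 < b) (x : E) :
    Integrable fun y : E ↦ exp (-(‖y - x‖ ^ 2 * b)) :=
  .of_integral_ne_zero (by rw [integral_exp_neg_mul_sq_norm_sub hE hb]; positivity)

lemma integral_compl_closedBall_exp_neg_mul_sq_norm_sub (hE : finrank ℝ E = 2) {b a : ℝ}
    (hb : 0 < b) (ha : 0 ≤ a) (x : E) :
    ∫ y in (closedBall x a)ᶜ, exp (-(‖y - x‖ ^ 2 * b)) = π / b * exp (-(a ^ 2 * b)) := by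
  set g : ℝ → ℝ := fun t ↦ exp (-(t ^ 2 * b))
  have hind : (closedBall x a)ᶜ.indicator (fun y ↦ g ‖y - x‖) =
      fun y ↦ (Ioi a).indicator g ‖y - x‖ := by
    ext y
    simp [indicator, dist_eq_norm]
  have hsmul : (fun t ↦ t • (Ioi a).indicator g t) = (Ioi a).indicator (fun t ↦ t • g t) :=
    funext fun t ↦ by rw [indicator_smul_apply]
  have hIoi : Ioi 0 ∩ Ioi a = Ioi a := inter_eq_right.mpr (Ioi_subset_Ioi ha)
  rw [← integral_indicator measurableSet_closedBall.compl, hind,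
    integral_sub_right_eq_self (fun y ↦ (Ioi a).indicator g ‖y‖) x,
    integral_fun_norm_of_finrank_eq_two hE, hsmul, setIntegral_indicator measurableSet_Ioi, hIoi]
  simp only [smul_eq_mul, g]
  rw [integral_Ioi_mul_exp_neg_mul_sq hb]
  field_simp

/-- `wplus H S` and `wminus H S` are `gaussianWeight H (Splus H S)` and
`gaussianWeight H (Sminus H S)` by definition. -/
noncomputable def gaussianWeight (H : ℝ) (A : Set E) (x : E) : ℝ :=
  H ^ 2 / π * ∫ y in A, exp (-(‖y - x‖ ^ 2 * H ^ 2))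

variable {H : ℝ} {A B : Set E} {x : E}

lemma gaussianWeight_nonneg : 0 ≤ gaussianWeight H A x :=
  mul_nonneg (by positivity) (setIntegral_nonneg_of_ae (.of_forall fun _ ↦ (exp_pos _).le))

lemma gaussianWeight_univ (hE : finrank ℝ E = 2) (hH : H ≠ 0) : gaussianWeight H univ x = 1 := by
  rw [gaussianWeight, setIntegral_univ, integral_exp_neg_mul_sq_norm_sub hE (by positivity)]
  field_simp

lemma gaussianWeight_mono (hE : finrank ℝ E = 2) (hH : H ≠ 0) (hAB : A ⊆ B) :
    gaussianWeight H A x ≤ gaussianWeight H B x :=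
  mul_le_mul_of_nonneg_left (setIntegral_mono_set
    (integrable_exp_neg_mul_sq_norm_sub hE (by positivity) x).integrableOn
    (.of_forall fun _ ↦ (exp_pos _).le) hAB.eventuallyLE) (by positivity)

lemma gaussianWeight_le_one (hE : finrank ℝ E = 2) (hH : H ≠ 0) : gaussianWeight H A x ≤ 1 :=
  (gaussianWeight_mono hE hH (subset_univ A)).trans_eq (gaussianWeight_univ hE hH)

lemma gaussianWeight_add_compl (hE : finrank ℝ E = 2) (hH : H ≠ 0) (hA : MeasurableSet A) :
    gaussianWeight H A x + gaussianWeight H Aᶜ x = 1 := by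
  rw [← gaussianWeight_univ hE hH (x := x), gaussianWeight, gaussianWeight,
    gaussianWeight, ← mul_add, setIntegral_univ,
    integral_add_compl hA (integrable_exp_neg_mul_sq_norm_sub hE (by positivity) x)]

lemma gaussianWeight_compl_closedBall (hE : finrank ℝ E = 2) (hH : H ≠ 0) {r : ℝ}
    (hr : 0 ≤ r) :
    gaussianWeight H (closedBall x r)ᶜ x = exp (-(r ^ 2 * H ^ 2)) := by
  rw [gaussianWeight, integral_compl_closedBall_exp_neg_mul_sq_norm_sub hE (by positivity) hr]
  field_simp

lemma gaussianWeight_closedBall (hE : finrank ℝ E = 2) (hH : H ≠ 0) {r : ℝ} (hr : 0 ≤ r) :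
    gaussianWeight H (closedBall x r) x = 1 - exp (-(r ^ 2 * H ^ 2)) := by
  rw [← gaussianWeight_compl_closedBall hE hH hr,
    ← gaussianWeight_add_compl hE hH measurableSet_closedBall (x := x)]
  ring

lemma gaussianWeight_le_of_subset_closedBall_zero (hE : finrank ℝ E = 2) {R : ℝ} (hR : 0 ≤ R)
    (hA : A ⊆ closedBall 0 R) (hx : 2 * R ≤ ‖x‖) :
    gaussianWeight H A x ≤ R ^ 2 * H ^ 2 * exp (-(‖x‖ ^ 2 * H ^ 2 / 4)) := by
  have : Nontrivial E := Module.nontrivial_of_finrank_pos (R := ℝ) (by omega)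
  have hcont : Continuous fun y : E ↦ exp (-(‖y - x‖ ^ 2 * H ^ 2)) := by fun_prop
  have hintegrable : IntegrableOn (fun y : E ↦ exp (-(‖y - x‖ ^ 2 * H ^ 2))) (closedBall 0 R) :=
    hcont.continuousOn.integrableOn_compact (isCompact_closedBall 0 R)
  have hfar (y : E) (hy : y ∈ closedBall 0 R) :
      exp (-(‖y - x‖ ^ 2 * H ^ 2)) ≤ exp (-(‖x‖ ^ 2 * H ^ 2 / 4)) := by
    have hy : ‖y‖ ≤ R := mem_closedBall_zero_iff.mp hy
    have hhalf : ‖x‖ / 2 ≤ ‖y - x‖ := by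
      linarith [norm_sub_norm_le x y, norm_sub_rev x y]
    have hsq : ‖x‖ ^ 2 / 4 ≤ ‖y - x‖ ^ 2 := by nlinarith [norm_nonneg x]
    exact exp_le_exp.mpr (by nlinarith [mul_le_mul_of_nonneg_right hsq (sq_nonneg H)])
  have hvol : volume.real (closedBall (0 : E) R) = R ^ 2 * π := by
    simp [measureReal_def, InnerProductSpace.volume_closedBall_of_dim_even (k := 1) hE, hE,
      pi_nonneg, hR]
  calc gaussianWeight H A x
      ≤ H ^ 2 / π * ∫ y in closedBall 0 R, exp (-(‖y - x‖ ^ 2 * H ^ 2)) := by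
        refine mul_le_mul_of_nonneg_left (setIntegral_mono_set hintegrable
          (.of_forall fun _ ↦ (exp_pos _).le) hA.eventuallyLE) (by positivity)
    _ ≤ H ^ 2 / π * ∫ _ in closedBall (0 : E) R, exp (-(‖x‖ ^ 2 * H ^ 2 / 4)) := by
        refine mul_le_mul_of_nonneg_left (setIntegral_mono_on hintegrable
          (integrableOn_const measure_closedBall_lt_top.ne) measurableSet_closedBall hfar)
          (by positivity)
    _ = R ^ 2 * H ^ 2 * exp (-(‖x‖ ^ 2 * H ^ 2 / 4)) := by
        rw [setIntegral_const, hvol, smul_eq_mul]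
        field_simp

lemma mul_exp_neg_div_four_le {u v : ℝ} (hu : 0 ≤ u) (huv : 4 * u ≤ v) :
    u * exp (-(v / 4)) ≤ 5 * exp (-(v / 5)) := by
  have hsplit : exp (-(v / 4)) = exp (-(v / 20)) * exp (-(v / 5)) := by
    rw [← exp_add]; ring_nf
  have hbound : u * exp (-(v / 20)) ≤ 5 :=
    calc u * exp (-(v / 20)) ≤ u * exp (-(u / 5)) := by gcongr u * exp (-?_); linarith
      _ = 5 * (u / 5 * exp (-(u / 5))) := by ring
      _ ≤ 5 * 1 := by
          gcongr
          exact (mul_exp_neg_le_exp_neg_one _).trans (exp_le_one_iff.mpr (by norm_num))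
      _ = 5 := mul_one 5
  rw [hsplit, ← mul_assoc]
  exact mul_le_mul_of_nonneg_right hbound (exp_pos _).le

end FinrankTwo

lemma EuclideanSpace.norm_le_two_mul_of_abs_le {y : EuclideanSpace ℝ (Fin 2)} {c : ℝ}
    (hy : ∀ i, |y i| ≤ c) : ‖y‖ ≤ 2 * c := by
  have h0 := hy 0
  have h1 := hy 1
  rw [EuclideanSpace.norm_eq, Fin.sum_univ_two, Real.norm_eq_abs, Real.norm_eq_abs,
    sqrt_le_iff]
  constructor
  · linarith [abs_nonneg (y 0)]
  · nlinarith [abs_nonneg (y 0), abs_nonneg (y 1)]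

lemma closedBall_subset_Splus {H : ℝ} {S : Set (EuclideanSpace ℝ (Fin 2))}
    {x : EuclideanSpace ℝ (Fin 2)} (hx : x ∈ S) : closedBall x (1 / √H) ⊆ Splus H S :=
  subset_biUnion_of_mem (u := fun x ↦ closedBall x (1 / √H)) hx

lemma Sminus_subset_compl_closedBall {H : ℝ} {S : Set (EuclideanSpace ℝ (Fin 2))}
    {x : EuclideanSpace ℝ (Fin 2)} (hx : x ∉ S) : Sminus H S ⊆ (closedBall x (1 / √H))ᶜ :=
  compl_subset_compl.mpr (subset_biUnion_of_mem (u := fun x ↦ closedBall x (1 / √H)) hx)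

lemma Sminus_subset (H : ℝ) (S : Set (EuclideanSpace ℝ (Fin 2))) : Sminus H S ⊆ S := by
  intro y hy
  by_contra hyS
  exact Sminus_subset_compl_closedBall hyS hy (mem_closedBall_self (by positivity))

theorem weight_function_properties (c : ℝ) (hc : 0 < c) :
    ∃ C : ℝ, 0 < C ∧ ∀ H : ℝ, 1 ≤ H → ∀ S : Set (EuclideanSpace ℝ (Fin 2)),
      MeasurableSet S → (∀ y ∈ S, ∀ i, |y i| ≤ c) →
      (∀ x, 0 ≤ wplus H S x ∧ wplus H S x ≤ 1 ∧
        0 ≤ wminus H S x ∧ wminus H S x ≤ 1) ∧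
      (∀ x ∈ S, 1 - C * Real.exp (-H) ≤ wplus H S x) ∧
      (∀ x ∉ S, wminus H S x ≤ C * Real.exp (-H)) ∧
      (∀ x : EuclideanSpace ℝ (Fin 2), 4 * c ≤ ‖x‖ →
        wminus H S x ≤ C * Real.exp (-(‖x‖ ^ 2 * H ^ 2 / 5))) := by
  refine ⟨5, by norm_num, fun H hH S _ hSc ↦ ?_⟩
  have hE : finrank ℝ (EuclideanSpace ℝ (Fin 2)) = 2 := finrank_euclideanSpace_fin
  have hH0 : H ≠ 0 := by positivity
  have hr : 0 ≤ 1 / √H := by positivity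
  have hrH : (1 / √H) ^ 2 * H ^ 2 = H := by
    rw [div_pow, sq_sqrt (by positivity)]
    field_simp
  refine ⟨fun x ↦ ⟨gaussianWeight_nonneg, gaussianWeight_le_one hE hH0, gaussianWeight_nonneg,
    gaussianWeight_le_one hE hH0⟩, fun x hx ↦ ?_, fun x hx ↦ ?_, fun x hx ↦ ?_⟩
  · calc 1 - 5 * exp (-H) ≤ 1 - exp (-H) := by linarith [exp_pos (-H)]
      _ = gaussianWeight H (closedBall x (1 / √H)) x := by
        rw [gaussianWeight_closedBall hE hH0 hr, hrH]
      _ ≤ wplus H S x := gaussianWeight_mono hE hH0 (closedBall_subset_Splus hx)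
  · calc wminus H S x ≤ gaussianWeight H (closedBall x (1 / √H))ᶜ x :=
          gaussianWeight_mono hE hH0 (Sminus_subset_compl_closedBall hx)
      _ = exp (-H) := by rw [gaussianWeight_compl_closedBall hE hH0 hr, hrH]
      _ ≤ 5 * exp (-H) := by linarith [exp_pos (-H)]
  · have hS : Sminus H S ⊆ closedBall 0 (2 * c) := fun y hy ↦ mem_closedBall_zero_iff.mpr
      (EuclideanSpace.norm_le_two_mul_of_abs_le (hSc y (Sminus_subset H S hy)))
    calc wminus H S x ≤ (2 * c) ^ 2 * H ^ 2 * exp (-(‖x‖ ^ 2 * H ^ 2 / 4)) :=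
          gaussianWeight_le_of_subset_closedBall_zero hE (by positivity) hS (by linarith)
      _ ≤ 5 * exp (-(‖x‖ ^ 2 * H ^ 2 / 5)) :=
          mul_exp_neg_div_four_le (by positivity) ?_
    have hx2 : (4 * c) ^ 2 ≤ ‖x‖ ^ 2 := pow_le_pow_left₀ (by positivity) hx 2
    nlinarith [mul_le_mul_of_nonneg_right hx2 (sq_nonneg H)]
end

section
/- Let p be an odd prime, let c, d be integers with p ∤ c·d, and let n ≥ 1. Then the number of triples (x, y, z) ∈ (ℤ/p^nℤ)³ such that x and y are not both divisible by p and c·x² + d·y² ≡ 2z² (mod p^n) equals p^{2n} − p^{2n−2}. -/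
/-
Over `𝔽_p` the number of solutions of `c x² + d y² = 2 z²` is `p²`: counting `y` for fixed
`x, z` with the quadratic character `χ` reduces this to sums `∑_x χ(a - b x²)`, which the
substitution `u = x²` turns into a Jacobi sum `∑_t χ(t) χ(1 - t) = -χ(-1)`. Dropping the
solution `0` leaves `p² - 1` primitive ones. Writing a lift of a solution `s` mod `p^n` as
`s + p^n v`, the equation mod `p^(n+1)` is a linear equation for `v` mod `p` with coefficient
vector `(2cx, 2dy, -4z)`, which is nonzero when `s` is primitive; so every primitive solution
mod `p^n` has exactly `p²` lifts.
-/

open Finset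

section QuadraticForm

variable {F : Type*} [Field F] [Fintype F] [DecidableEq F]

theorem card_filter_sq_eq (hF : ringChar F ≠ 2) (a : F) :
    (#{x : F | x ^ 2 = a} : ℤ) = quadraticChar F a + 1 := by
  simpa [Set.toFinset_ofPred] using quadraticChar_card_sqrts hF a

theorem sum_comp_sq (hF : ringChar F ≠ 2) (G : F → ℤ) :
    ∑ x : F, G (x ^ 2) = ∑ u : F, (quadraticChar F u + 1) * G u := by
  rw [← sum_fiberwise univ (· ^ 2) (fun x => G (x ^ 2))]
  refine sum_congr rfl fun u _ => ?_
  rw [sum_congr rfl fun x hx => by rw [(mem_filter.mp hx).2], sum_const, ← card_filter_sq_eq hF u,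
    nsmul_eq_mul]

theorem sum_quadraticChar_sub_mul (hF : ringChar F ≠ 2) (e : F) {f : F} (hf : f ≠ 0) :
    ∑ u : F, quadraticChar F (e - f * u) = 0 :=
  (((Equiv.mulLeft₀ f hf).trans (Equiv.subLeft e)).sum_comp (quadraticChar F ·)).trans
    (quadraticChar_sum_zero hF)

theorem sum_quadraticChar_sq : ∑ u : F, quadraticChar F u ^ 2 = Fintype.card F - 1 := by
  have h (u : F) : quadraticChar F u ^ 2 = if u ≠ 0 then 1 else 0 := by
    split_ifs with hu
    · exact quadraticChar_sq_one hu
    · simp [not_not.mp hu]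
  rw [sum_congr rfl fun u _ => h u, sum_boole, filter_ne', card_erase_of_mem (mem_univ 0)]
  exact Nat.cast_pred Fintype.card_pos

theorem sum_quadraticChar_mul_quadraticChar_sub_mul (hF : ringChar F ≠ 2) (e : F) {f : F}
    (hf : f ≠ 0) :
    ∑ u : F, quadraticChar F u * quadraticChar F (e - f * u) =
      if e = 0 then (Fintype.card F - 1) * quadraticChar F (-f) else -quadraticChar F (-f) := by
  split_ifs with he
  · subst he
    simp_rw [zero_sub, ← neg_mul, map_mul, ← sum_quadraticChar_sq, sum_mul]
    exact sum_congr rfl fun u _ => by ring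
  · -- the substitution `u = (e / f) t` turns the sum into `χ f` times a Jacobi sum
    have hef : e / f ≠ 0 := div_ne_zero he hf
    rw [← Equiv.sum_comp (Equiv.mulLeft₀ (e / f) hef)]
    have h (t : F) : quadraticChar F (e / f * t) * quadraticChar F (e - f * (e / f * t)) =
        quadraticChar F f * (quadraticChar F t * quadraticChar F (1 - t)) := by
      have : e / f * t * (e - f * (e / f * t)) = f * (e / f) ^ 2 * (t * (1 - t)) := by
        field_simp
      rw [← map_mul, ← map_mul, this, map_mul, map_mul, quadraticChar_sq_one' hef, mul_one,
        map_mul]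
    simp only [Equiv.mulLeft₀_apply, h, ← mul_sum]
    have hJ := jacobiSum_nontrivial_inv (quadraticChar_ne_one hF)
    rw [(quadraticChar_isQuadratic F).inv, jacobiSum] at hJ
    rw [hJ, mul_neg, ← map_mul, mul_neg_one]

theorem sum_quadraticChar_sub_mul_sq (hF : ringChar F ≠ 2) (e : F) {f : F} (hf : f ≠ 0) :
    ∑ x : F, quadraticChar F (e - f * x ^ 2) =
      if e = 0 then (Fintype.card F - 1) * quadraticChar F (-f) else -quadraticChar F (-f) := by
  rw [sum_comp_sq hF (fun u => quadraticChar F (e - f * u))]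
  simp only [add_mul, one_mul, sum_add_distrib, sum_quadraticChar_sub_mul hF e hf, add_zero]
  exact sum_quadraticChar_mul_quadraticChar_sub_mul hF e hf

theorem card_mul_sq_add_mul_sq_eq_mul_sq (hF : ringChar F ≠ 2) {A B C : F} (hA : A ≠ 0)
    (hB : B ≠ 0) (hC : C ≠ 0) :
    #{t : F × F × F | A * t.1 ^ 2 + B * t.2.1 ^ 2 = C * t.2.2 ^ 2} = Fintype.card F ^ 2 := by
  have hy (x z : F) : (#{y : F | A * x ^ 2 + B * y ^ 2 = C * z ^ 2} : ℤ) =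
      quadraticChar F (B⁻¹ * C * z ^ 2 - B⁻¹ * A * x ^ 2) + 1 := by
    rw [← card_filter_sq_eq hF]
    congr 2
    ext y
    simp only [mem_filter, mem_univ, true_and]
    constructor <;> intro h
    · field_simp
      linear_combination h
    · field_simp at h
      linear_combination h
  have hz (z : F) : B⁻¹ * C * z ^ 2 = 0 ↔ z = 0 := by simp [hB, hC]
  zify
  calc (#{t : F × F × F | A * t.1 ^ 2 + B * t.2.1 ^ 2 = C * t.2.2 ^ 2} : ℤ)
      = ∑ x : F, ∑ z : F, (#{y : F | A * x ^ 2 + B * y ^ 2 = C * z ^ 2} : ℤ) := by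
        simp only [card_filter, Fintype.sum_prod_type]
        push_cast
        exact sum_congr rfl fun x _ => sum_comm
    _ = ∑ z : F, ∑ x : F, quadraticChar F (B⁻¹ * C * z ^ 2 - B⁻¹ * A * x ^ 2)
          + (Fintype.card F : ℤ) ^ 2 := by
        simp only [hy, sum_add_distrib, sum_const, card_univ]
        rw [sum_comm]
        simp [sq]
    _ = (Fintype.card F : ℤ) ^ 2 := by
        simp only [sum_quadraticChar_sub_mul_sq hF _ (mul_ne_zero (inv_ne_zero hB) hA), hz]
        simp [sum_ite, filter_ne', filter_eq', card_erase_of_mem, Nat.cast_pred Fintype.card_pos]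

end QuadraticForm

section LinearEquation

variable {F : Type*} [Field F] [Fintype F] [DecidableEq F]

theorem card_mul_add_eq {ι : Type*} [Fintype ι] {α : F} (hα : α ≠ 0) (g : ι → F) (δ : F) :
    #{v : F × ι | α * v.1 + g v.2 = δ} = Fintype.card ι := by
  rw [← card_univ]
  refine card_nbij' Prod.snd (fun w => (α⁻¹ * (δ - g w), w)) (fun _ _ => mem_univ _)
    (fun w _ => ?_) (fun v hv => ?_) (fun _ _ => rfl)
  · simp [mul_inv_cancel_left₀ hα]
  · have hv : α * v.1 + g v.2 = δ := (mem_filter.mp hv).2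
    ext
    · simp [← hv, inv_mul_cancel_left₀ hα]
    · rfl

theorem card_linear_eq (α β γ δ : F) (h : α ≠ 0 ∨ β ≠ 0) :
    #{v : F × F × F | α * v.1 + β * v.2.1 + γ * v.2.2 = δ} = Fintype.card F ^ 2 := by
  rw [sq, ← Fintype.card_prod]
  rcases h with hα | hβ
  · simpa only [add_assoc] using card_mul_add_eq hα (fun w : F × F => β * w.1 + γ * w.2) δ
  · rw [← card_mul_add_eq hβ (fun w : F × F => α * w.1 + γ * w.2) δ]
    refine card_equiv ⟨fun v => (v.2.1, v.1, v.2.2), fun v => (v.2.1, v.1, v.2.2),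
      fun _ => rfl, fun _ => rfl⟩ fun v => ?_
    simp only [mem_filter, mem_univ, true_and, Equiv.coe_fn_mk]
    constructor <;> intro h <;> linear_combination h

end LinearEquation

theorem Int.pow_succ_dvd_add_iff {q : ℤ} (hq : q ≠ 0) {n : ℕ} (hn : n ≠ 0) (N L Q : ℤ) :
    q ^ (n + 1) ∣ N + q ^ n * L + q ^ (2 * n) * Q ↔ q ^ n ∣ N ∧ q ∣ N / q ^ n + L := by
  obtain ⟨m, rfl⟩ := Nat.exists_eq_succ_of_ne_zero hn
  have hqn : q ^ (m + 1) ≠ 0 := pow_ne_zero _ hq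
  have key (k : ℤ) :
      q ^ (m + 1 + 1) ∣ q ^ (m + 1) * k + q ^ (m + 1) * L + q ^ (2 * (m + 1)) * Q ↔ q ∣ k + L := by
    have : q ^ (m + 1) * k + q ^ (m + 1) * L + q ^ (2 * (m + 1)) * Q =
        q ^ (m + 1) * (q * (q ^ m * Q) + (k + L)) := by ring
    rw [this, pow_succ, mul_dvd_mul_iff_left hqn, dvd_add_right (dvd_mul_right _ _)]
  constructor
  · intro h
    have hN : q ^ (m + 1) ∣ N := by
      have hQ : q ^ (m + 1) ∣ q ^ (m + 1) * L + q ^ (2 * (m + 1)) * Q :=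
        dvd_add (dvd_mul_right _ _) ((pow_dvd_pow q (by omega)).mul_right Q)
      rw [add_assoc] at h
      exact (dvd_add_left hQ).mp ((pow_dvd_pow q (m + 1).le_succ).trans h)
    obtain ⟨k, rfl⟩ := hN
    rw [Int.mul_ediv_cancel_left _ hqn, ← key]
    exact ⟨dvd_mul_right _ _, h⟩
  · rintro ⟨⟨k, rfl⟩, h⟩
    rwa [Int.mul_ediv_cancel_left _ hqn, ← key] at h

namespace ZMod

variable (p : ℕ) [NeZero p] (n : ℕ)

theorem val_add_pow_mul_val_lt (x : ZMod (p ^ n)) (a : ZMod p) :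
    x.val + p ^ n * a.val < p ^ (n + 1) :=
  calc x.val + p ^ n * a.val < p ^ n + p ^ n * a.val := by gcongr; exact x.val_lt
    _ = p ^ n * (a.val + 1) := by ring
    _ ≤ p ^ n * p := by gcongr; exact a.val_lt
    _ = p ^ (n + 1) := (pow_succ p n).symm

def powSuccEquiv : ZMod (p ^ n) × ZMod p ≃ ZMod (p ^ (n + 1)) where
  toFun v := ((v.1.val + p ^ n * v.2.val : ℕ) : ZMod (p ^ (n + 1)))
  invFun X := (X.cast, ((X.val / p ^ n : ℕ) : ZMod p))
  left_inv := by
    rintro ⟨x, a⟩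
    ext
    · dsimp only
      rw [cast_natCast (pow_dvd_pow p n.le_succ)]
      simp
    · simp only [val_natCast_of_lt (val_add_pow_mul_val_lt p n x a),
        Nat.add_mul_div_left _ _ (pow_pos (NeZero.pos p) n), Nat.div_eq_of_lt x.val_lt, zero_add,
        natCast_zmod_val]
  right_inv X := by
    have hdiv : X.val / p ^ n < p := by
      rw [Nat.div_lt_iff_lt_mul (pow_pos (NeZero.pos p) n), ← pow_succ']
      exact X.val_lt
    change (((X.cast : ZMod (p ^ n)).val + p ^ n * ((X.val / p ^ n : ℕ) : ZMod p).val : ℕ) :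
      ZMod (p ^ (n + 1))) = X
    rw [← natCast_val, val_natCast, val_natCast, Nat.mod_eq_of_lt hdiv, Nat.mod_add_div,
      natCast_zmod_val]

def powSuccEquiv₃ :
    (ZMod (p ^ n) × ZMod (p ^ n) × ZMod (p ^ n)) × (ZMod p × ZMod p × ZMod p) ≃
      ZMod (p ^ (n + 1)) × ZMod (p ^ (n + 1)) × ZMod (p ^ (n + 1)) :=
  (Equiv.prodProdProdComm _ _ _ _).trans <| (powSuccEquiv p n).prodCongr <|
    (Equiv.prodProdProdComm _ _ _ _).trans <| (powSuccEquiv p n).prodCongr (powSuccEquiv p n)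

variable {p n}

theorem val_powSuccEquiv (v : ZMod (p ^ n) × ZMod p) :
    (powSuccEquiv p n v).val = v.1.val + p ^ n * v.2.val :=
  val_natCast_of_lt (val_add_pow_mul_val_lt p n v.1 v.2)

theorem dvd_val_powSuccEquiv_iff (hn : n ≠ 0) (v : ZMod (p ^ n) × ZMod p) :
    p ∣ (powSuccEquiv p n v).val ↔ p ∣ v.1.val := by
  rw [val_powSuccEquiv, Nat.dvd_add_left ((dvd_pow_self p hn).mul_right _)]

theorem powSuccEquiv_apply (x : ZMod (p ^ n)) (a : ZMod p) :
    powSuccEquiv p n (x, a) = ((x.val + p ^ n * a.val : ℤ) : ZMod (p ^ (n + 1))) := by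
  simp [powSuccEquiv]

theorem mul_sq_add_mul_sq_powSuccEquiv_iff (hn : n ≠ 0) (c d e : ℤ) (x y z : ZMod (p ^ n))
    (a b w : ZMod p) :
    (c : ZMod (p ^ (n + 1))) * powSuccEquiv p n (x, a) ^ 2 + d * powSuccEquiv p n (y, b) ^ 2 =
        e * powSuccEquiv p n (z, w) ^ 2 ↔
      (c : ZMod (p ^ n)) * x ^ 2 + d * y ^ 2 = e * z ^ 2 ∧
        2 * c * (x.val : ZMod p) * a + 2 * d * (y.val : ZMod p) * b +
            -(2 * e * (z.val : ZMod p)) * w =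
          -(((c * x.val ^ 2 + d * y.val ^ 2 - e * z.val ^ 2) / p ^ n : ℤ) : ZMod p) := by
  have hzero {m : ℕ} (A B C : ZMod m) : (c : ZMod m) * A ^ 2 + d * B ^ 2 = e * C ^ 2 ↔
      (c : ZMod m) * A ^ 2 + d * B ^ 2 - e * C ^ 2 = 0 := sub_eq_zero.symm
  set N : ℤ := c * x.val ^ 2 + d * y.val ^ 2 - e * z.val ^ 2
  set L : ℤ := 2 * c * x.val * a.val + 2 * d * y.val * b.val - 2 * e * z.val * w.val
  set Q : ℤ := c * a.val ^ 2 + d * b.val ^ 2 - e * w.val ^ 2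
  have hexpand : c * (x.val + p ^ n * a.val : ℤ) ^ 2 + d * (y.val + p ^ n * b.val : ℤ) ^ 2 -
      e * (z.val + p ^ n * w.val : ℤ) ^ 2 = N + p ^ n * L + p ^ (2 * n) * Q := by ring
  have hN : ((N : ℤ) : ZMod (p ^ n)) = (c : ZMod (p ^ n)) * x ^ 2 + d * y ^ 2 - e * z ^ 2 := by
    simp [N]
  have hL : ((N / p ^ n + L : ℤ) : ZMod p) =
      2 * c * (x.val : ZMod p) * a + 2 * d * (y.val : ZMod p) * b +
        -(2 * e * (z.val : ZMod p)) * w + ((N / p ^ n : ℤ) : ZMod p) := by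
    simp [L]
    ring
  have hlift : (c : ZMod (p ^ (n + 1))) * ((x.val + p ^ n * a.val : ℤ) : ZMod (p ^ (n + 1))) ^ 2 +
      d * ((y.val + p ^ n * b.val : ℤ) : ZMod (p ^ (n + 1))) ^ 2 -
      e * ((z.val + p ^ n * w.val : ℤ) : ZMod (p ^ (n + 1))) ^ 2 =
      ((N + p ^ n * L + p ^ (2 * n) * Q : ℤ) : ZMod (p ^ (n + 1))) := by
    rw [← hexpand]
    push_cast
    ring
  rw [hzero, hzero, powSuccEquiv_apply, powSuccEquiv_apply, powSuccEquiv_apply, ← hN, hlift,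
    intCast_zmod_eq_zero_iff_dvd, intCast_zmod_eq_zero_iff_dvd, Nat.cast_pow, Nat.cast_pow,
    Int.pow_succ_dvd_add_iff (Int.natCast_ne_zero.mpr (NeZero.ne p)) hn,
    ← intCast_zmod_eq_zero_iff_dvd _ p, hL, ← eq_neg_iff_add_eq_zero]

end ZMod

open ZMod

def primitiveSolutions (p m : ℕ) [NeZero m] (c d e : ℤ) : Finset (ZMod m × ZMod m × ZMod m) :=
  {t | ¬(p ∣ t.1.val ∧ p ∣ t.2.1.val) ∧ (c : ZMod m) * t.1 ^ 2 + d * t.2.1 ^ 2 = e * t.2.2 ^ 2}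

/-- The top digits `v` for which `s + p^n v` solves the equation mod `p^(n+1)`, by
`mul_sq_add_mul_sq_powSuccEquiv_iff`; the `ℤ`-division is exact when `s` is a solution. -/
def liftDigits (p n : ℕ) [NeZero p] (c d e : ℤ) (s : ZMod (p ^ n) × ZMod (p ^ n) × ZMod (p ^ n)) :
    Finset (ZMod p × ZMod p × ZMod p) :=
  {v | 2 * c * (s.1.val : ZMod p) * v.1 + 2 * d * (s.2.1.val : ZMod p) * v.2.1 +
      -(2 * e * (s.2.2.val : ZMod p)) * v.2.2 =
    -(((c * s.1.val ^ 2 + d * s.2.1.val ^ 2 - e * s.2.2.val ^ 2) / p ^ n : ℤ) : ZMod p)}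

section PrimitiveSolutions

variable {p n : ℕ} {c d e : ℤ}

theorem powSuccEquiv₃_mem_primitiveSolutions_iff [NeZero p] (hn : n ≠ 0)
    (s : ZMod (p ^ n) × ZMod (p ^ n) × ZMod (p ^ n)) (v : ZMod p × ZMod p × ZMod p) :
    powSuccEquiv₃ p n (s, v) ∈ primitiveSolutions p (p ^ (n + 1)) c d e ↔
      s ∈ primitiveSolutions p (p ^ n) c d e ∧ v ∈ liftDigits p n c d e s := by
  obtain ⟨x, y, z⟩ := s
  obtain ⟨a, b, w⟩ := v
  simp only [primitiveSolutions, liftDigits, mem_filter, mem_univ, true_and, powSuccEquiv₃,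
    Equiv.trans_apply, Equiv.prodProdProdComm_apply, Equiv.prodCongr_apply, Prod.map,
    dvd_val_powSuccEquiv_iff hn, mul_sq_add_mul_sq_powSuccEquiv_iff hn]
  tauto

theorem card_liftDigits [Fact p.Prime] (hp : p ≠ 2) (hc : (c : ZMod p) ≠ 0)
    (hd : (d : ZMod p) ≠ 0) {s : ZMod (p ^ n) × ZMod (p ^ n) × ZMod (p ^ n)}
    (hs : s ∈ primitiveSolutions p (p ^ n) c d e) : #(liftDigits p n c d e s) = p ^ 2 := by
  have h2 : (2 : ZMod p) ≠ 0 := Ring.two_ne_zero (by rwa [ZMod.ringChar_zmod_n])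
  have hprim : ¬(p ∣ s.1.val ∧ p ∣ s.2.1.val) := (mem_filter.mp hs).2.1
  rw [liftDigits, card_linear_eq, ZMod.card]
  simpa only [ne_eq, mul_eq_zero, h2, hc, hd, false_or, ZMod.natCast_eq_zero_iff, ← not_and_or]
    using hprim

theorem card_primitiveSolutions_pow_succ [Fact p.Prime] (hp : p ≠ 2) (hc : (c : ZMod p) ≠ 0)
    (hd : (d : ZMod p) ≠ 0) (hn : n ≠ 0) :
    #(primitiveSolutions p (p ^ (n + 1)) c d e) = p ^ 2 * #(primitiveSolutions p (p ^ n) c d e) :=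
  calc #(primitiveSolutions p (p ^ (n + 1)) c d e)
      = #((primitiveSolutions p (p ^ n) c d e).sigma (liftDigits p n c d e)) :=
        (card_equiv ((Equiv.sigmaEquivProd _ _).trans (powSuccEquiv₃ p n)) fun _ => by
          simp [powSuccEquiv₃_mem_primitiveSolutions_iff hn]).symm
    _ = ∑ _s ∈ primitiveSolutions p (p ^ n) c d e, p ^ 2 := by
        rw [card_sigma]
        exact sum_congr rfl fun _ hs => card_liftDigits hp hc hd hs
    _ = p ^ 2 * #(primitiveSolutions p (p ^ n) c d e) := by rw [sum_const, smul_eq_mul, mul_comm]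

theorem card_primitiveSolutions_prime [Fact p.Prime] (hp : p ≠ 2) (hc : (c : ZMod p) ≠ 0)
    (hd : (d : ZMod p) ≠ 0) (he : (e : ZMod p) ≠ 0) :
    #(primitiveSolutions p p c d e) = p ^ 2 - 1 := by
  have hdvd (x : ZMod p) : p ∣ x.val ↔ x = 0 := by
    rw [← ZMod.natCast_eq_zero_iff, ZMod.natCast_val, ZMod.cast_id]
  have hsub : primitiveSolutions p p c d e =
      ({t | (c : ZMod p) * t.1 ^ 2 + d * t.2.1 ^ 2 = e * t.2.2 ^ 2} : Finset _).erase 0 := by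
    ext ⟨x, y, z⟩
    simp only [primitiveSolutions, mem_filter, mem_univ, true_and, mem_erase, hdvd, ne_eq,
      Prod.mk_eq_zero]
    refine and_congr_left fun h => not_congr ⟨fun ⟨hx, hy⟩ => ⟨hx, hy, ?_⟩, fun h => ⟨h.1, h.2.1⟩⟩
    subst hx hy
    simpa [he] using h.symm
  rw [hsub, card_erase_of_mem (by simp),
    card_mul_sq_add_mul_sq_eq_mul_sq (by rwa [ZMod.ringChar_zmod_n]) hc hd he, ZMod.card]

end PrimitiveSolutions

theorem card_primitiveSolutions_pow {p : ℕ} [Fact p.Prime] (hp : p ≠ 2) {c d e : ℤ}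
    (hc : (c : ZMod p) ≠ 0) (hd : (d : ZMod p) ≠ 0) (he : (e : ZMod p) ≠ 0) (n : ℕ) :
    #(primitiveSolutions p (p ^ (n + 1)) c d e) = p ^ (2 * n) * (p ^ 2 - 1) := by
  induction n with
  | zero => convert card_primitiveSolutions_prime hp hc hd he using 3 <;> simp
  | succ n ih =>
    rw [card_primitiveSolutions_pow_succ hp hc hd n.succ_ne_zero, ih]
    ring

theorem padic_density_nu_zero (p : ℕ) (hp : p.Prime) (hodd : Odd p)
    (c d : ℤ) (hcd : ¬ (p : ℤ) ∣ c * d) (n : ℕ) (hn : 1 ≤ n) :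
    Set.ncard {t : ZMod (p ^ n) × ZMod (p ^ n) × ZMod (p ^ n) |
      ¬(p ∣ t.1.val ∧ p ∣ t.2.1.val) ∧
      (c : ZMod (p ^ n)) * t.1 ^ 2 + (d : ZMod (p ^ n)) * t.2.1 ^ 2 =
        2 * t.2.2 ^ 2} = p ^ (2 * n) - p ^ (2 * n - 2) := by
  have := Fact.mk hp
  have hp2 : p ≠ 2 := by rintro rfl; exact absurd hodd (by decide)
  have hcd' : (c : ZMod p) * d ≠ 0 := by
    rwa [← Int.cast_mul, Ne, ZMod.intCast_zmod_eq_zero_iff_dvd]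
  have h2 : ((2 : ℤ) : ZMod p) ≠ 0 := by
    simpa using Ring.two_ne_zero (R := ZMod p) (by rwa [ZMod.ringChar_zmod_n])
  obtain ⟨m, rfl⟩ : ∃ m, n = m + 1 := ⟨n - 1, by omega⟩
  have hset : {t : ZMod (p ^ (m + 1)) × ZMod (p ^ (m + 1)) × ZMod (p ^ (m + 1)) |
      ¬(p ∣ t.1.val ∧ p ∣ t.2.1.val) ∧
      (c : ZMod (p ^ (m + 1))) * t.1 ^ 2 + (d : ZMod (p ^ (m + 1))) * t.2.1 ^ 2 = 2 * t.2.2 ^ 2} =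
      primitiveSolutions p (p ^ (m + 1)) c d 2 := by
    ext; simp [primitiveSolutions]
  rw [hset, Set.ncard_coe_finset, card_primitiveSolutions_pow hp2 (left_ne_zero_of_mul hcd')
    (right_ne_zero_of_mul hcd') h2, Nat.mul_sub, mul_one, ← pow_add]
  congr 2
end

section
/- There exists an absolute constant C > 0 with the following property. Let p be an odd prime, let c, d be integers with p ∤ c·d such that 2d is a quadratic residue modulo p, and let μ ≥ 1 and n ≥ μ + 3 be integers. Then |p^{−2n}·M − (1 − 1/p)·(μ·(1 − 1/p) + 1 + 1/p)| ≤ C·p^{−(n−μ−2)}, where M is the number of triples (x, y, z) ∈ (ℤ/p^nℤ)³ such that x and y are not both divisible by p and c·p^μ·x² + d·y² ≡ 2z² (mod p^n). -/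
/-!
The count is exact, so the error term vanishes. As `2d ≡ w²` modulo the odd prime `p`, Hensel's
lemma gives `e` with `e² = 2d` in `ℤ/p^n`, and the invertible substitution `u = ey - 2z`,
`v = ey + 2z` turns the equation into `uv = -2c p^μ x²`. If `x` is a non-unit, so is `uv`, and
then in the local ring `ℤ/p^n` the element `y` is a unit exactly when `u` or `v` is. For each of
the `φ(p^n)` units `x` there are `(μ + 1) φ(p^n)` pairs with `uv = p^μ · unit`: for each
valuation `k ≤ μ` of `u` there are `φ(p^n) / p^k` choices of `u` and then `p^k` of `v`. For each
of the `p^(n-1)` non-units `x`, exactly one of `u`, `v` is a unit, giving `2 φ(p^n)` pairs.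
-/

open Finset


theorem Finset.card_filter_prod_eq_sum {α β : Type*} [Fintype α] [Fintype β]
    (P : α → β → Prop) [∀ a b, Decidable (P a b)] :
    #{w : α × β | P w.1 w.2} = ∑ a, #{b | P a b} := by
  simp only [card_filter, Fintype.sum_prod_type]

section CommMonoid

variable {M : Type*} [CommMonoid M] [Fintype M] [DecidableEq M]
  [DecidablePred (IsUnit : M → Prop)]

theorem card_filter_mul_eq_and_isUnit_fst (b : M) :
    #{w : M × M | w.1 * w.2 = b ∧ IsUnit w.1} = #{u : M | IsUnit u} := by
  refine card_bij (fun w _ => w.1) (fun w hw => by simp_all) ?_ ?_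
  · rintro ⟨u, v⟩ h ⟨u', v'⟩ h' (rfl : u = u')
    simp only [mem_filter, mem_univ, true_and] at h h'
    simpa using h.2.mul_left_cancel (h.1.trans h'.1.symm)
  · intro u hu
    have hu : IsUnit u := by simpa using hu
    exact ⟨(u, ↑hu.unit⁻¹ * b), by simp [hu, ← mul_assoc], rfl⟩

theorem card_filter_mul_eq_and_isUnit_snd (b : M) :
    #{w : M × M | w.1 * w.2 = b ∧ IsUnit w.2} = #{u : M | IsUnit u} := by
  rw [← card_filter_mul_eq_and_isUnit_fst b]
  exact card_equiv (Equiv.prodComm M M) (by simp [mul_comm])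

theorem card_filter_mul_eq_and_isUnit_or {b : M} (hb : ¬IsUnit b) :
    #{w : M × M | w.1 * w.2 = b ∧ (IsUnit w.1 ∨ IsUnit w.2)} = 2 * #{u : M | IsUnit u} := by
  have hdisj : Disjoint (univ.filter fun w : M × M => w.1 * w.2 = b ∧ IsUnit w.1)
      (univ.filter fun w : M × M => w.1 * w.2 = b ∧ IsUnit w.2) := by
    rw [disjoint_filter]
    rintro w - ⟨rfl, h1⟩ ⟨-, h2⟩
    exact hb (h1.mul h2)
  rw [two_mul]
  nth_rw 1 [← card_filter_mul_eq_and_isUnit_fst b]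
  rw [← card_filter_mul_eq_and_isUnit_snd b, ← card_union_of_disjoint hdisj, ← filter_or]
  simp only [and_or_left]

end CommMonoid

theorem IsLocalRing.isUnit_add_of_isUnit_of_not_isUnit_mul {R : Type*} [CommRing R]
    [IsLocalRing R] {a b : R} (ha : IsUnit a) (hab : ¬IsUnit (a * b)) : IsUnit (a + b) := by
  by_contra h
  have hb : ¬IsUnit b := fun hb => hab (ha.mul hb)
  have := nonunits_add h (show -b ∈ nonunits R by simpa using hb)
  rw [add_neg_cancel_right] at this
  exact this ha

theorem IsLocalRing.isUnit_iff_isUnit_or_isUnit_of_add_eq {R : Type*} [CommRing R]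
    [IsLocalRing R] {u v c y : R} (hc : IsUnit c) (hsum : u + v = c * y)
    (hprod : ¬IsUnit (u * v)) : IsUnit y ↔ IsUnit u ∨ IsUnit v := by
  rw [← hc.mul_left_iff, ← hsum]
  refine ⟨isUnit_or_isUnit_of_isUnit_add, ?_⟩
  rintro (hu | hv)
  · exact isUnit_add_of_isUnit_of_not_isUnit_mul hu hprod
  · rw [add_comm]
    exact isUnit_add_of_isUnit_of_not_isUnit_mul hv (by rwa [mul_comm])

theorem card_filter_isUnit_or_and_quadratic_eq {R : Type*} [CommRing R] [IsLocalRing R]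
    [Fintype R] [DecidableEq R] [DecidablePred (IsUnit : R → Prop)] {d e : R}
    (h2 : IsUnit (2 : R)) (he : IsUnit e) (hed : e ^ 2 = 2 * d) (k : R) :
    #{t : R × R × R | (IsUnit t.1 ∨ IsUnit t.2.1) ∧ k * t.1 ^ 2 + d * t.2.1 ^ 2 = 2 * t.2.2 ^ 2} =
      #{t : R × R × R | (IsUnit t.1 ∨ IsUnit t.2.1 ∨ IsUnit t.2.2) ∧
        t.2.1 * t.2.2 = -2 * k * t.1 ^ 2} := by
  obtain ⟨i2, hi2⟩ := h2.exists_right_inv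
  obtain ⟨ie, hie⟩ := he.exists_right_inv
  let σ : R × R × R ≃ R × R × R :=
    { toFun := fun t => (t.1, e * t.2.1 - 2 * t.2.2, e * t.2.1 + 2 * t.2.2)
      invFun := fun t => (t.1, ie * i2 * (t.2.1 + t.2.2), i2 * i2 * (t.2.2 - t.2.1))
      left_inv := fun ⟨x, y, z⟩ => by
        ext
        · rfl
        · linear_combination (2 * i2 * y) * hie + y * hi2
        · linear_combination (2 * i2 + 1) * z * hi2
      right_inv := fun ⟨x, u, v⟩ => by
        ext
        · rfl
        · linear_combination (i2 * (u + v)) * hie - (i2 * (v - u)) * hi2 + u * hi2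
        · linear_combination (i2 * (u + v)) * hie + (i2 * (v - u)) * hi2 + v * hi2 }
  refine card_equiv σ fun ⟨x, y, z⟩ => ?_
  simp only [mem_filter, mem_univ, true_and, σ, Equiv.coe_fn_mk]
  have hprod : (e * y - 2 * z) * (e * y + 2 * z) + 2 * k * x ^ 2 =
      2 * (k * x ^ 2 + d * y ^ 2 - 2 * z ^ 2) := by
    linear_combination y ^ 2 * hed
  rw [← sub_eq_zero (b := 2 * z ^ 2), ← h2.mul_right_eq_zero, ← hprod, add_eq_zero_iff_eq_neg,
    ← neg_mul, ← neg_mul]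
  refine and_congr_left fun huv => ?_
  by_cases hx : IsUnit x
  · simp [hx]
  · simp only [hx, false_or]
    refine IsLocalRing.isUnit_iff_isUnit_or_isUnit_of_add_eq (h2.mul he) (by ring) ?_
    rw [huv]
    exact fun h => hx ((isUnit_pow_iff two_ne_zero).mp (isUnit_of_mul_isUnit_right h))

open Polynomial in
theorem PadicInt.exists_sq_eq_intCast_of_sq_modEq {p : ℕ} [Fact p.Prime] (h2 : ¬(p : ℤ) ∣ 2)
    {a w : ℤ} (ha : ¬(p : ℤ) ∣ a) (hw : w ^ 2 ≡ a [ZMOD p]) : ∃ z : ℤ_[p], z ^ 2 = a := by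
  have hpw : ¬(p : ℤ) ∣ 2 * w := fun h =>
    ((Nat.prime_iff_prime_int.mp Fact.out).dvd_mul.mp h).elim h2 fun hw' =>
      ha (by simpa using dvd_sub (dvd_pow hw' two_ne_zero) hw.symm.dvd)
  have hF : aeval (w : ℤ_[p]) (X ^ 2 - C a) = ((w ^ 2 - a : ℤ) : ℤ_[p]) := by simp
  have hF' : aeval (w : ℤ_[p]) (derivative (X ^ 2 - C a)) = ((2 * w : ℤ) : ℤ_[p]) := by
    simp only [derivative_sub, derivative_X_pow, derivative_C, sub_zero, map_mul, map_natCast,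
      Int.cast_mul, Int.cast_ofNat]
    norm_num
  obtain ⟨z, hz, -⟩ := hensels_lemma (F := X ^ 2 - C a) (a := (w : ℤ_[p])) (by
    rw [hF, hF', le_antisymm (norm_le_one _) (not_lt.mp ((norm_int_lt_one_iff_dvd _).not.mpr hpw)),
      one_pow]
    exact (norm_int_lt_one_iff_dvd _).mpr hw.symm.dvd)
  exact ⟨z, by simpa [sub_eq_zero] using hz⟩

namespace ZMod

theorem natCast_dvd_iff_dvd_val {N m : ℕ} [NeZero N] (h : m ∣ N) (w : ZMod N) :
    (m : ZMod N) ∣ w ↔ m ∣ w.val := by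
  constructor
  · rintro ⟨t, rfl⟩
    rw [val_mul, val_natCast, Nat.dvd_mod_iff h]
    exact (Nat.dvd_mod_iff h).mpr dvd_rfl |>.mul_right _
  · rintro ⟨j, hj⟩
    exact ⟨j, by rw [← natCast_zmod_val w, hj, Nat.cast_mul]⟩

theorem card_filter_dvd_val {N m : ℕ} [NeZero N] (h : m ∣ N) :
    #{w : ZMod N | m ∣ w.val} = N / m := by
  obtain ⟨q, rfl⟩ := h
  have hm : 0 < m := Nat.pos_of_mul_pos_right (Nat.pos_of_ne_zero (NeZero.ne (m * q)))
  have hval : ∀ j < q, ((m * j : ℕ) : ZMod (m * q)).val = m * j := fun j hj => by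
    rw [val_natCast, Nat.mod_eq_of_lt (Nat.mul_lt_mul_of_pos_left hj hm)]
  rw [Nat.mul_div_cancel_left q hm]
  conv_rhs => rw [← card_range q]
  refine (card_nbij' (fun j => ((m * j : ℕ) : ZMod (m * q))) (fun w => w.val / m)
    ?_ ?_ ?_ ?_).symm
  · intro j hj
    simp_all
  · intro w _
    simpa using Nat.div_lt_of_lt_mul (val_lt w)
  · intro j hj
    simp_all [Nat.mul_div_cancel_left j hm]
  · intro w hw
    simp [Nat.mul_div_cancel' (by simpa using hw : m ∣ w.val)]

section PrimePow

variable {p : ℕ} [Fact p.Prime] {n : ℕ}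

theorem pow_dvd_iff_dvd_val {k : ℕ} (hk : k ≤ n) (w : ZMod (p ^ n)) :
    (p : ZMod (p ^ n)) ^ k ∣ w ↔ p ^ k ∣ w.val := by
  rw [← Nat.cast_pow, natCast_dvd_iff_dvd_val (pow_dvd_pow p hk)]

theorem card_filter_pow_dvd {k : ℕ} (hk : k ≤ n) :
    #{w : ZMod (p ^ n) | (p : ZMod (p ^ n)) ^ k ∣ w} = p ^ (n - k) := by
  simp only [pow_dvd_iff_dvd_val hk]
  rw [card_filter_dvd_val (pow_dvd_pow p hk), Nat.pow_div hk (Fact.out : p.Prime).pos]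

theorem card_filter_pow_mul_eq_zero {k : ℕ} (hk : k ≤ n) :
    #{w : ZMod (p ^ n) | (p : ZMod (p ^ n)) ^ k * w = 0} = p ^ k := by
  have hp := (Fact.out : p.Prime).pos
  have hsplit : p ^ n = p ^ k * p ^ (n - k) := by rw [← pow_add, Nat.add_sub_cancel' hk]
  have hiff : ∀ w : ZMod (p ^ n), (p : ZMod (p ^ n)) ^ k * w = 0 ↔ p ^ (n - k) ∣ w.val := by
    intro w
    rw [← natCast_zmod_val w, ← Nat.cast_pow, ← Nat.cast_mul, natCast_eq_zero_iff, val_natCast,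
      Nat.mod_eq_of_lt (val_lt w)]
    have := Nat.mul_dvd_mul_iff_left (pow_pos hp k) (b := p ^ (n - k)) (c := w.val)
    rwa [← hsplit] at this
  simp only [hiff]
  rw [card_filter_dvd_val (pow_dvd_pow p (Nat.sub_le n k)), Nat.pow_div (Nat.sub_le n k) hp,
    Nat.sub_sub_self hk]

theorem isUnit_iff_not_dvd_val (hn : n ≠ 0) (w : ZMod (p ^ n)) : IsUnit w ↔ ¬p ∣ w.val := by
  rw [← isUnit_natCast_iff_not_dvd_pow Fact.out (Nat.pos_of_ne_zero hn), natCast_zmod_val]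

theorem isUnit_iff_not_dvd (hn : n ≠ 0) (w : ZMod (p ^ n)) :
    IsUnit w ↔ ¬(p : ZMod (p ^ n)) ∣ w := by
  rw [isUnit_iff_not_dvd_val hn, ← pow_one (p : ZMod (p ^ n)),
    pow_dvd_iff_dvd_val (Nat.one_le_iff_ne_zero.mpr hn), pow_one]

theorem isUnit_intCast_iff (hn : n ≠ 0) (z : ℤ) :
    IsUnit (z : ZMod (p ^ n)) ↔ ¬(p : ℤ) ∣ z := by
  rw [coe_int_isUnit_iff_isCoprime, Nat.cast_pow, IsCoprime.pow_left_iff (Nat.pos_of_ne_zero hn),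
    Prime.coprime_iff_not_dvd (Nat.prime_iff_prime_int.mp Fact.out)]

theorem isLocalRing_pow (hn : n ≠ 0) : IsLocalRing (ZMod (p ^ n)) :=
  have : Fact (1 < p ^ n) := ⟨Nat.one_lt_pow hn (Fact.out : p.Prime).one_lt⟩
  .of_isUnit_or_isUnit_of_isUnit_add fun a b hab => by
    simp only [isUnit_iff_not_dvd hn] at hab ⊢
    by_contra! h
    exact hab (dvd_add h.1 h.2)

theorem card_filter_not_isUnit (hn : n ≠ 0) :
    #{w : ZMod (p ^ n) | ¬IsUnit w} = p ^ (n - 1) := by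
  simp only [isUnit_iff_not_dvd hn, not_not]
  simpa using card_filter_pow_dvd (p := p) (Nat.one_le_iff_ne_zero.mpr hn)

theorem card_filter_isUnit (hn : n ≠ 0) :
    #{w : ZMod (p ^ n) | IsUnit w} = p ^ n - p ^ (n - 1) := by
  have := card_filter_add_card_filter_not (s := (univ : Finset (ZMod (p ^ n)))) IsUnit
  rw [card_filter_not_isUnit hn, card_univ, ZMod.card] at this
  exact Nat.eq_sub_of_add_eq this

theorem card_filter_pow_dvd_and_not_pow_succ_dvd {k : ℕ} (hk : k < n) :
    #{u : ZMod (p ^ n) | (p : ZMod (p ^ n)) ^ k ∣ u ∧ ¬(p : ZMod (p ^ n)) ^ (k + 1) ∣ u} =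
      p ^ (n - k) - p ^ (n - (k + 1)) := by
  rw [filter_and_not, card_sdiff_of_subset, card_filter_pow_dvd hk.le, card_filter_pow_dvd hk]
  exact monotone_filter_right _ fun u _ hu => (pow_dvd_pow _ k.le_succ).trans hu

theorem exists_isUnit_of_pow_dvd_of_not_pow_succ_dvd (hn : n ≠ 0) {k : ℕ} {u : ZMod (p ^ n)}
    (hu : (p : ZMod (p ^ n)) ^ k ∣ u) (hu' : ¬(p : ZMod (p ^ n)) ^ (k + 1) ∣ u) :
    ∃ t, IsUnit t ∧ u = p ^ k * t := by
  obtain ⟨t, rfl⟩ := hu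
  refine ⟨t, (isUnit_iff_not_dvd hn t).mpr fun ht => hu' ?_, rfl⟩
  rw [pow_succ]
  exact mul_dvd_mul_left _ ht

theorem card_filter_mul_eq_of_pow_dvd {k : ℕ} (hk : k < n) {u b : ZMod (p ^ n)}
    (hu : (p : ZMod (p ^ n)) ^ k ∣ u) (hu' : ¬(p : ZMod (p ^ n)) ^ (k + 1) ∣ u)
    (hb : (p : ZMod (p ^ n)) ^ k ∣ b) :
    #{v : ZMod (p ^ n) | u * v = b} = p ^ k := by
  obtain ⟨t, ht, rfl⟩ := exists_isUnit_of_pow_dvd_of_not_pow_succ_dvd (by omega) hu hu'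
  obtain ⟨b, rfl⟩ := hb
  have hsol : (p : ZMod (p ^ n)) ^ k * t * (↑ht.unit⁻¹ * b) = p ^ k * b := by
    rw [mul_assoc, ← mul_assoc t, ht.mul_val_inv, one_mul]
  have hfib := AddMonoidHom.card_fiber_eq_of_mem_range (AddMonoidHom.mulLeft (p ^ k * t))
    (x := p ^ k * b) (y := 0) ⟨_, hsol⟩ ⟨0, mul_zero _⟩
  rw [← card_filter_pow_mul_eq_zero hk.le]
  refine hfib.trans (congrArg Finset.card (filter_congr fun v _ => ?_))
  rw [AddMonoidHom.coe_mulLeft, mul_right_comm, ht.mul_left_eq_zero]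

theorem not_pow_succ_dvd_pow_mul {μ : ℕ} (hμ : μ < n) {s : ZMod (p ^ n)} (hs : IsUnit s) :
    ¬(p : ZMod (p ^ n)) ^ (μ + 1) ∣ p ^ μ * s := by
  have hp := (Fact.out : p.Prime).one_lt
  rw [hs.dvd_mul_right, pow_dvd_iff_dvd_val hμ, ← Nat.cast_pow, val_natCast,
    Nat.mod_eq_of_lt (Nat.pow_lt_pow_right hp hμ), Nat.pow_dvd_pow_iff_le_right hp]
  omega

theorem sum_card_filter_mul_eq_pow_mul {μ : ℕ} (hμ : μ < n) {s : ZMod (p ^ n)} (hs : IsUnit s)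
    {k : ℕ} (hk : k ≤ μ + 1) :
    ∑ u with (p : ZMod (p ^ n)) ^ k ∣ u, #{v | u * v = p ^ μ * s} =
      (μ + 1 - k) * (p ^ n - p ^ (n - 1)) := by
  induction h : μ + 1 - k generalizing k with
  | zero =>
    obtain rfl : k = μ + 1 := by omega
    rw [zero_mul]
    refine sum_eq_zero fun u hu => ?_
    rw [card_eq_zero, filter_eq_empty_iff]
    intro v _ huv
    exact not_pow_succ_dvd_pow_mul hμ hs (huv ▸ ((mem_filter.mp hu).2.mul_right v))
  | succ j ih =>
    have hkn : k < n := by omega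
    have hcoarse : ∀ u : ZMod (p ^ n),
        (p : ZMod (p ^ n)) ^ k ∣ u ∧ (p : ZMod (p ^ n)) ^ (k + 1) ∣ u ↔
          (p : ZMod (p ^ n)) ^ (k + 1) ∣ u :=
      fun u => and_iff_right_of_imp (pow_dvd_pow _ k.le_succ).trans
    rw [← sum_filter_add_sum_filter_not _ fun u => (p : ZMod (p ^ n)) ^ (k + 1) ∣ u, filter_filter,
      filter_filter]
    simp only [hcoarse]
    rw [ih (by omega) (by omega), sum_congr rfl fun u hu => card_filter_mul_eq_of_pow_dvd hkn
      (mem_filter.mp hu).2.1 (mem_filter.mp hu).2.2 ((pow_dvd_pow _ (by omega)).mul_right s),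
      sum_const, card_filter_pow_dvd_and_not_pow_succ_dvd hkn, smul_eq_mul, Nat.sub_mul,
      ← pow_add, ← pow_add, show n - k + k = n by omega, show n - (k + 1) + k = n - 1 by omega,
      add_one_mul]

theorem card_filter_mul_eq_pow_mul {μ : ℕ} (hμ : μ < n) {s : ZMod (p ^ n)} (hs : IsUnit s) :
    #{w : ZMod (p ^ n) × ZMod (p ^ n) | w.1 * w.2 = p ^ μ * s} =
      (μ + 1) * (p ^ n - p ^ (n - 1)) := by
  rw [card_filter_prod_eq_sum fun u v : ZMod (p ^ n) => u * v = p ^ μ * s]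
  simpa using sum_card_filter_mul_eq_pow_mul hμ hs (Nat.zero_le _)

theorem card_filter_isUnit_or_and_mul_eq {μ : ℕ} (hμ : μ < n) {a : ZMod (p ^ n)} (ha : IsUnit a) :
    #{t : ZMod (p ^ n) × ZMod (p ^ n) × ZMod (p ^ n) |
        (IsUnit t.1 ∨ IsUnit t.2.1 ∨ IsUnit t.2.2) ∧ t.2.1 * t.2.2 = p ^ μ * a * t.1 ^ 2} =
      (p ^ n - p ^ (n - 1)) * ((μ + 1) * (p ^ n - p ^ (n - 1))) +
        p ^ (n - 1) * (2 * (p ^ n - p ^ (n - 1))) := by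
  have hn : n ≠ 0 := by omega
  rw [card_filter_prod_eq_sum fun (x : ZMod (p ^ n)) (w : ZMod (p ^ n) × ZMod (p ^ n)) =>
    (IsUnit x ∨ IsUnit w.1 ∨ IsUnit w.2) ∧ w.1 * w.2 = p ^ μ * a * x ^ 2]
  have hfibre : ∀ x : ZMod (p ^ n),
      #{w : ZMod (p ^ n) × ZMod (p ^ n) |
          (IsUnit x ∨ IsUnit w.1 ∨ IsUnit w.2) ∧ w.1 * w.2 = p ^ μ * a * x ^ 2} =
        if IsUnit x then (μ + 1) * (p ^ n - p ^ (n - 1)) else 2 * (p ^ n - p ^ (n - 1)) := by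
    intro x
    split_ifs with hx
    · simp only [hx, true_or, true_and, mul_assoc]
      exact card_filter_mul_eq_pow_mul hμ (ha.mul (hx.pow 2))
    · simp only [hx, false_or, and_comm (a := IsUnit _ ∨ IsUnit _)]
      rw [card_filter_mul_eq_and_isUnit_or, card_filter_isUnit hn]
      exact fun h => hx ((isUnit_pow_iff two_ne_zero).mp (isUnit_of_mul_isUnit_right h))
  simp only [hfibre, sum_ite, sum_const, smul_eq_mul, card_filter_isUnit hn,
    card_filter_not_isUnit hn]

theorem ncard_primitive_solutions (hp : Odd p) {c d : ℤ} (hcd : ¬(p : ℤ) ∣ c * d)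
    (hd : ∃ w : ℤ, w ^ 2 ≡ 2 * d [ZMOD p]) {μ : ℕ} (hμ : μ < n) :
    Set.ncard {t : ZMod (p ^ n) × ZMod (p ^ n) × ZMod (p ^ n) |
        ¬(p ∣ t.1.val ∧ p ∣ t.2.1.val) ∧
          ((c * (p : ℤ) ^ μ : ℤ) : ZMod (p ^ n)) * t.1 ^ 2 + (d : ZMod (p ^ n)) * t.2.1 ^ 2 =
            2 * t.2.2 ^ 2} =
      (p ^ n - p ^ (n - 1)) * ((μ + 1) * (p ^ n - p ^ (n - 1))) +
        p ^ (n - 1) * (2 * (p ^ n - p ^ (n - 1))) := by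
  have hn : n ≠ 0 := by omega
  have := isLocalRing_pow (p := p) hn
  have hp2 : ¬(p : ℤ) ∣ 2 := fun h => by
    have := Nat.le_of_dvd two_pos (Int.natCast_dvd_natCast.mp h)
    have := (Fact.out : p.Prime).two_le
    obtain ⟨k, rfl⟩ := hp
    omega
  have hpz := Nat.prime_iff_prime_int.mp (Fact.out : p.Prime)
  have hc : ¬(p : ℤ) ∣ c := fun h => hcd (h.mul_right d)
  have hpd : ¬(p : ℤ) ∣ 2 * d := fun h =>
    (hpz.dvd_mul.mp h).elim hp2 fun h => hcd (h.mul_left c)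
  obtain ⟨w, hw⟩ := hd
  obtain ⟨z, hz⟩ := PadicInt.exists_sq_eq_intCast_of_sq_modEq hp2 hpd hw
  have hed : PadicInt.toZModPow n z ^ 2 = 2 * (d : ZMod (p ^ n)) := by
    rw [← map_pow, hz, map_intCast, Int.cast_mul, Int.cast_ofNat]
  have h2 : IsUnit (2 : ZMod (p ^ n)) := by exact_mod_cast (isUnit_intCast_iff hn 2).mpr hp2
  have he : IsUnit (PadicInt.toZModPow n z) := by
    refine (isUnit_pow_iff two_ne_zero).mp ?_
    rw [hed]
    exact_mod_cast (isUnit_intCast_iff hn _).mpr hpd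
  have ha : IsUnit (-2 * c : ZMod (p ^ n)) := h2.neg.mul ((isUnit_intCast_iff hn c).mpr hc)
  rw [Set.ncard_eq_toFinset_card', Set.toFinset_ofPred]
  simp only [not_and_or, ← isUnit_iff_not_dvd_val hn, Int.cast_mul, Int.cast_pow, Int.cast_natCast]
  rw [card_filter_isUnit_or_and_quadratic_eq h2 he hed,
    show -2 * ((c : ZMod (p ^ n)) * p ^ μ) = p ^ μ * (-2 * c) by ring]
  exact card_filter_isUnit_or_and_mul_eq hμ ha

end PrimePow

end ZMod

theorem primitive_density_eq {p n μ : ℕ} (hp : 0 < p) (hn : n ≠ 0) :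
    (((p ^ n - p ^ (n - 1)) * ((μ + 1) * (p ^ n - p ^ (n - 1))) +
        p ^ (n - 1) * (2 * (p ^ n - p ^ (n - 1))) : ℕ) : ℝ) / (p : ℝ) ^ (2 * n) =
      (1 - 1 / (p : ℝ)) * ((μ : ℝ) * (1 - 1 / (p : ℝ)) + 1 + 1 / (p : ℝ)) := by
  obtain ⟨m, rfl⟩ := Nat.exists_eq_add_one_of_ne_zero hn
  have hle : p ^ m ≤ p ^ (m + 1) := Nat.pow_le_pow_right hp m.le_succ
  push_cast [Nat.add_sub_cancel, Nat.cast_sub hle]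
  field_simp
  ring

theorem padic_density_nu_mu :
    ∃ C : ℝ, 0 < C ∧ ∀ p : ℕ, p.Prime → Odd p → ∀ c d : ℤ, ¬ (p : ℤ) ∣ c * d →
      (∃ w : ℤ, w ^ 2 ≡ 2 * d [ZMOD (p : ℤ)]) →
      ∀ μ n : ℕ, 1 ≤ μ → μ + 3 ≤ n →
        |(Set.ncard {t : ZMod (p ^ n) × ZMod (p ^ n) × ZMod (p ^ n) |
            ¬(p ∣ t.1.val ∧ p ∣ t.2.1.val) ∧
            ((c * (p : ℤ) ^ μ : ℤ) : ZMod (p ^ n)) * t.1 ^ 2 +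
              (d : ZMod (p ^ n)) * t.2.1 ^ 2 = 2 * t.2.2 ^ 2} : ℝ) / (p : ℝ) ^ (2 * n) -
          (1 - 1 / (p : ℝ)) * ((μ : ℝ) * (1 - 1 / (p : ℝ)) + 1 + 1 / (p : ℝ))| ≤
        C / (p : ℝ) ^ (n - μ - 2) := by
  refine ⟨1, one_pos, fun p hp hodd c d hcd hd μ n _ hn => ?_⟩
  have := Fact.mk hp
  rw [ZMod.ncard_primitive_solutions hodd hcd hd (by omega), primitive_density_eq hp.pos (by omega),
    sub_self, abs_zero]
  positivity
end
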